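/- arXiv:2405.05037 — 2 statements merged into one kernel-verified Lean document; each statement's English description precedes it below -/
import Mathlib

section
/- Let ρ and σ be quantum states on ℂ^d, let ℳ be a nonempty set of POVMs on ℂ^d, and let α ∈ (0,∞] (including α = 1 and α = ∞). With π := (1/d)·I the completely mixed state, D_α^ℳ(ρ‖σ) = sup_{ε ∈ (0,1]} D_α^ℳ( (1−ε)ρ + επ ‖ (1−ε)σ + επ ). -/
open scoped Kronecker ComplexOrder
open Matrix Filter

noncomputable section
open scoped Classical

namespace MRD

/-- A POVM on the Hilbert space `ℂ^n` (for a finite index type `n`), over a finite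
outcome alphabet `ι`. -/
structure POVM (n : Type) [Fintype n] [DecidableEq n] where
  ι : Type
  [fin : Fintype ι]
  elem : ι → Matrix n n ℂ
  pos : ∀ z, (elem z).PosSemidef
  sum_one : ∑ z, elem z = 1

attribute [instance] POVM.fin

variable {n : Type} [Fintype n] [DecidableEq n]

/-- The probability distribution induced by a state and a POVM (Born rule). -/
def POVM.dist (M : POVM n) (ρ : Matrix n n ℂ) : M.ι → ℝ :=
  fun z => ((ρ * M.elem z).trace).re

/-- `tr2 A B = Re tr[A B]`. -/
def tr2 (A B : Matrix n n ℂ) : ℝ := ((A * B).trace).re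

/-- The cone `C_ℳ` generated by a set of POVMs: the union of the conical hulls of the POVMs. -/
def cone (𝓜 : Set (POVM n)) : Set (Matrix n n ℂ) :=
  { ω | ∃ M ∈ 𝓜, ∃ lam : M.ι → ℝ, (∀ z, 0 ≤ lam z) ∧ ω = ∑ z, (lam z : ℂ) • M.elem z }

/-- Functional calculus for Hermitian matrices (junk value `0` on non-Hermitian input). -/
def hermCFC (f : ℝ → ℝ) (ω : Matrix n n ℂ) : Matrix n n ℂ :=
  if h : ω.IsHermitian then
    (h.eigenvectorUnitary : Matrix n n ℂ) * Matrix.diagonal (fun i => (f (h.eigenvalues i) : ℂ)) *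
      star (h.eigenvectorUnitary : Matrix n n ℂ)
  else 0

/-- Real powers of a (Hermitian, positive definite) matrix, via functional calculus. -/
def mpow (ω : Matrix n n ℂ) (p : ℝ) : Matrix n n ℂ := hermCFC (fun x => x ^ p) ω

/-- Logarithm of a (Hermitian, positive definite) matrix, via functional calculus. -/
def mlog (ω : Matrix n n ℂ) : Matrix n n ℂ := hermCFC Real.log ω

/-- The classical quantity `Q_α(μ‖ν) = ∑_z μ(z)^α ν(z)^(1-α)`. -/
def Qclass {Z : Type} [Fintype Z] (α : ℝ) (μ ν : Z → ℝ) : ℝ :=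
  ∑ z, μ z ^ α * ν z ^ (1 - α)

/-- `Q_α` for `α > 1`, valued in `[0,∞]`: it is `+∞` unless `μ ≪ ν`. -/
def QclassE {Z : Type} [Fintype Z] (α : ℝ) (μ ν : Z → ℝ) : EReal :=
  if ∀ z, ν z = 0 → μ z = 0 then ((Qclass α μ ν : ℝ) : EReal) else ⊤

/-- The classical max-divergence `D_∞(μ‖ν) = max_{z : μ(z) ≠ 0} log (μ(z)/ν(z))`,
with the convention `log (c/0) = +∞`. -/
def Dmax {Z : Type} [Fintype Z] (μ ν : Z → ℝ) : EReal :=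
  ⨆ z : {z : Z // μ z ≠ 0},
    (if ν z.1 = 0 then (⊤ : EReal) else ((Real.log (μ z.1 / ν z.1) : ℝ) : EReal))

/-- The classical Rényi divergence of order `α ∈ (0,∞]` (`α : EReal`), with the standard
conventions for `+∞` in the non-absolutely-continuous / orthogonal cases. -/
def rdiv {Z : Type} [Fintype Z] (α : EReal) (μ ν : Z → ℝ) : EReal :=
  if α = ⊤ then Dmax μ ν
  else if α = 1 then
    (if ∀ z, ν z = 0 → μ z = 0 then
      (((∑ z, μ z * Real.log (μ z / ν z)) : ℝ) : EReal) else ⊤)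
  else if 1 < α then
    (if ∀ z, ν z = 0 → μ z = 0 then
      (((α.toReal - 1)⁻¹ * Real.log (Qclass α.toReal μ ν) : ℝ) : EReal) else ⊤)
  else
    (if ∃ z, μ z ≠ 0 ∧ ν z ≠ 0 then
      (((α.toReal - 1)⁻¹ * Real.log (Qclass α.toReal μ ν) : ℝ) : EReal) else ⊤)

/-- The measured Rényi divergence `D_α^ℳ(ρ‖σ) = sup_{M ∈ ℳ} D_α(μ_ρ^M‖μ_σ^M)`. -/
def mrdiv (𝓜 : Set (POVM n)) (α : EReal) (ρ σ : Matrix n n ℂ) : EReal :=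
  ⨆ M ∈ 𝓜, rdiv α (M.dist ρ) (M.dist σ)

/-- The variational objective function `ν_α((ρ,σ); ω)`, for `α ∈ (0,∞]`. -/
def nuObj (α : EReal) (ρ σ ω : Matrix n n ℂ) : ℝ :=
  if α = ⊤ then Real.log (tr2 ρ ω) + 1 - tr2 σ ω
  else if α = 1 then tr2 ρ (mlog ω) + 1 - tr2 σ ω
  else if α.toReal < 1 / 2 then
    (α.toReal - 1)⁻¹ *
      Real.log (α.toReal * tr2 ρ ω + (1 - α.toReal) * tr2 σ (mpow ω (α.toReal / (α.toReal - 1))))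
  else
    (α.toReal - 1)⁻¹ *
      Real.log (α.toReal * tr2 ρ (mpow ω ((α.toReal - 1) / α.toReal)) + (1 - α.toReal) * tr2 σ ω)

section Bipartite

variable (a b : Type) [Fintype a] [DecidableEq a] [Fintype b] [DecidableEq b]

/-- A family of mutually orthogonal orthogonal projections summing to the identity. -/
def IsOrthProjFamily {ι : Type} [Fintype ι] {m : Type} [Fintype m] [DecidableEq m]
    (P : ι → Matrix m m ℂ) : Prop :=
  (∀ x, (P x).IsHermitian) ∧ (∀ x, P x * P x = P x) ∧
    (∀ x y, x ≠ y → P x * P y = 0) ∧ ∑ x, P x = 1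

/-- The class `P-LO(A:B)` of local projective measurements. -/
def PLO : Set (POVM (a × b)) :=
  { M | ∃ (X Y : Type) (_ : Fintype X) (_ : Fintype Y)
      (PA : X → Matrix a a ℂ) (PB : Y → Matrix b b ℂ) (e : M.ι ≃ X × Y),
      IsOrthProjFamily PA ∧ IsOrthProjFamily PB ∧
      ∀ z, M.elem z = PA (e z).1 ⊗ₖ PB (e z).2 }

/-- The class `LO(A:B)` of local measurements. -/
def LO : Set (POVM (a × b)) :=
  { M | ∃ (MA : POVM a) (MB : POVM b) (e : M.ι ≃ MA.ι × MB.ι),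
      ∀ z, M.elem z = MA.elem (e z).1 ⊗ₖ MB.elem (e z).2 }

/-- The partial transpose (transposition of the `B` tensor factor). -/
def ptrans {a b : Type} (X : Matrix (a × b) (a × b) ℂ) : Matrix (a × b) (a × b) ℂ :=
  Matrix.of fun x y => X (x.1, y.2) (y.1, x.2)

/-- Separable (positive semidefinite) operators: finite sums of tensor products of positive
semidefinite operators. -/
def SepMat {a b : Type} [Fintype a] [DecidableEq a] [Fintype b] [DecidableEq b]
    (ω : Matrix (a × b) (a × b) ℂ) : Prop :=
  ∃ (k : ℕ) (X : Fin k → Matrix a a ℂ) (Y : Fin k → Matrix b b ℂ),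
    (∀ z, (X z).PosSemidef) ∧ (∀ z, (Y z).PosSemidef) ∧ ω = ∑ z, X z ⊗ₖ Y z

/-- The class `SEP(A:B)`: POVMs all of whose elements are separable. -/
def SEP : Set (POVM (a × b)) := { M | ∀ z, SepMat (M.elem z) }

/-- The class `PPT(A:B)`: POVMs all of whose elements have positive semidefinite
partial transpose. -/
def PPT : Set (POVM (a × b)) := { M | ∀ z, (ptrans (M.elem z)).PosSemidef }

end Bipartite

/-- The maximally entangled state `Φ` on `ℂ^d ⊗ ℂ^d`. -/
def maxEnt (d : ℕ) : Matrix (Fin d × Fin d) (Fin d × Fin d) ℂ :=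
  Matrix.of fun x y => if x.1 = x.2 ∧ y.1 = y.2 then ((d : ℂ))⁻¹ else 0

/-- The orthogonal complement `Φ⊥ = (1 - Φ)/(d² - 1)`. -/
def maxEntPerp (d : ℕ) : Matrix (Fin d × Fin d) (Fin d × Fin d) ℂ :=
  ((d : ℂ) ^ 2 - 1)⁻¹ • (1 - maxEnt d)

/-- The isotropic state `i(q) = q Φ + (1 - q) Φ⊥`. -/
def iso (d : ℕ) (q : ℝ) : Matrix (Fin d × Fin d) (Fin d × Fin d) ℂ :=
  (q : ℂ) • maxEnt d + ((1 - q : ℝ) : ℂ) • maxEntPerp d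

/-- The `n`-fold tensor (Kronecker) power of a matrix on `ℂ^d`. -/
def tpow {d : ℕ} (ρ : Matrix (Fin d) (Fin d) ℂ) (n : ℕ) :
    Matrix (Fin n → Fin d) (Fin n → Fin d) ℂ :=
  Matrix.of fun x y => ∏ i, ρ (x i) (y i)

/-- The `n`-fold tensor power of a bipartite matrix on `ℂ^d ⊗ ℂ^d`, written on
`((ℂ^d)^{⊗n})_A ⊗ ((ℂ^d)^{⊗n})_B`, i.e. with all `A`-factors grouped into one block and all
`B`-factors into the other. -/
def tpowBip {d : ℕ} (ρ : Matrix (Fin d × Fin d) (Fin d × Fin d) ℂ) (n : ℕ) :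
    Matrix ((Fin n → Fin d) × (Fin n → Fin d)) ((Fin n → Fin d) × (Fin n → Fin d)) ℂ :=
  Matrix.of fun x y => ∏ i, ρ (x.1 i, x.2 i) (y.1 i, y.2 i)

/-- The tensor product of a matrix on `(ℂ^d)^{⊗k}` and a matrix on `(ℂ^d)^{⊗l}`, as a matrix
on `(ℂ^d)^{⊗(k+l)}`. -/
def prodElem {d k l : ℕ} (A : Matrix (Fin k → Fin d) (Fin k → Fin d) ℂ)
    (B : Matrix (Fin l → Fin d) (Fin l → Fin d) ℂ) :
    Matrix (Fin (k + l) → Fin d) (Fin (k + l) → Fin d) ℂ :=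
  Matrix.of fun x y =>
    A (fun i => x (Fin.castAdd l i)) (fun i => y (Fin.castAdd l i)) *
      B (fun j => x (Fin.natAdd k j)) (fun j => y (Fin.natAdd k j))

/-- A family `(ℳ_n)_n` of measurement sets is closed under tensor products if for all
`M_k ∈ ℳ_k` and `M_l ∈ ℳ_l` the product POVM `M_k ⊗ M_l` belongs to `ℳ_{k+l}`. -/
def TensorClosed {d : ℕ} (𝓜 : ∀ m : ℕ, Set (POVM (Fin m → Fin d))) : Prop :=
  ∀ k l : ℕ, ∀ Mk ∈ 𝓜 k, ∀ Ml ∈ 𝓜 l,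
    ∃ M ∈ 𝓜 (k + l), ∃ e : Mk.ι × Ml.ι ≃ M.ι,
      ∀ z, M.elem (e z) = prodElem (Mk.elem z.1) (Ml.elem z.2)

/-- `T` is a test available in the measurement set `𝓝`: `0 ≤ T ≤ 1` and the binary POVM
`{T, 1 - T}` belongs to `𝓝`. -/
def IsTest {m : Type} [Fintype m] [DecidableEq m] (𝓝 : Set (POVM m)) (T : Matrix m m ℂ) : Prop :=
  T.PosSemidef ∧ (1 - T).PosSemidef ∧
    ∃ M ∈ 𝓝, ∃ e : M.ι ≃ Bool, M.elem (e.symm true) = T ∧ M.elem (e.symm false) = 1 - T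

/-- Extended-real logarithm of a real number: `-∞` on `(-∞,0]`. -/
def elogr (x : ℝ) : EReal := if x ≤ 0 then ⊥ else ((Real.log x : ℝ) : EReal)

/-- Extended-real logarithm on `EReal`. -/
def elog (x : EReal) : EReal :=
  if x ≤ 0 then ⊥ else if x = ⊤ then ⊤ else ((Real.log x.toReal : ℝ) : EReal)


/-- Extra: the action of `id_m ⊗ 𝒢` on block matrices (for complete positivity). -/
def blockApply {d : ℕ} (𝒢 : Matrix (Fin d) (Fin d) ℂ →ₗ[ℂ] Matrix (Fin d) (Fin d) ℂ) (m : ℕ)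
    (X : Matrix (Fin m × Fin d) (Fin m × Fin d) ℂ) : Matrix (Fin m × Fin d) (Fin m × Fin d) ℂ :=
  Matrix.of fun p q => 𝒢 (Matrix.of fun s t => X (p.1, s) (q.1, t)) p.2 q.2


/-! ### Auxiliary lemmas -/

section Aux
set_option linter.unusedSectionVars false

lemma aux_trace_re_conjT_nonneg (B : Matrix n n ℂ) : 0 ≤ ((Bᴴ * B).trace).re := by
  rw [Matrix.trace, Complex.re_sum]
  apply Finset.sum_nonneg
  intro j _
  rw [Matrix.diag, Matrix.mul_apply, Complex.re_sum]
  apply Finset.sum_nonneg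
  intro i _
  simp only [Matrix.conjTranspose_apply]
  rw [RCLike.star_def, ← Complex.normSq_eq_conj_mul_self]
  exact Complex.normSq_nonneg _

lemma aux_trace_re_conjT_eq_zero {B : Matrix n n ℂ} (h : ((Bᴴ * B).trace).re = 0) :
    B = 0 := by
  rw [Matrix.trace, Complex.re_sum] at h
  have h2 : ∀ j ∈ Finset.univ, ((Bᴴ * B).diag j).re = 0 := by
    rw [← Finset.sum_eq_zero_iff_of_nonneg]
    · exact h
    · intro j _
      rw [Matrix.diag, Matrix.mul_apply, Complex.re_sum]
      apply Finset.sum_nonneg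
      intro i _
      simp only [Matrix.conjTranspose_apply]
      rw [RCLike.star_def, ← Complex.normSq_eq_conj_mul_self]
      exact Complex.normSq_nonneg _
  ext i j
  have := h2 j (Finset.mem_univ j)
  rw [Matrix.diag, Matrix.mul_apply, Complex.re_sum] at this
  have h3 : ∀ i ∈ Finset.univ, ((Bᴴ j i * B i j) : ℂ).re = 0 := by
    rw [← Finset.sum_eq_zero_iff_of_nonneg]
    · exact this
    · intro i _
      simp only [Matrix.conjTranspose_apply]
      rw [RCLike.star_def, ← Complex.normSq_eq_conj_mul_self]
      exact Complex.normSq_nonneg _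
  have h4 := h3 i (Finset.mem_univ i)
  simp only [Matrix.conjTranspose_apply] at h4
  rw [RCLike.star_def, ← Complex.normSq_eq_conj_mul_self] at h4
  have h5 : Complex.normSq (B i j) = 0 := by exact_mod_cast h4
  have := Complex.normSq_eq_zero.mp h5
  simpa using this

lemma aux_tr2_nonneg {A B : Matrix n n ℂ} (hA : A.PosSemidef) (hB : B.PosSemidef) :
    0 ≤ ((A * B).trace).re := by
  obtain ⟨C, rfl⟩ := (show ∃ C : Matrix n n ℂ, A = Cᴴ * C from by open scoped MatrixOrder in exact CStarAlgebra.nonneg_iff_eq_star_mul_self.mp hA.nonneg)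
  obtain ⟨D, rfl⟩ := (show ∃ C : Matrix n n ℂ, B = Cᴴ * C from by open scoped MatrixOrder in exact CStarAlgebra.nonneg_iff_eq_star_mul_self.mp hB.nonneg)
  have e : ((Cᴴ * C) * (Dᴴ * D)).trace = (((C * Dᴴ)ᴴ) * (C * Dᴴ)).trace := by
    rw [Matrix.conjTranspose_mul, Matrix.conjTranspose_conjTranspose]
    rw [show (D * Cᴴ) * (C * Dᴴ) = D * (Cᴴ * C) * Dᴴ by noncomm_ring]
    rw [Matrix.trace_mul_cycle D (Cᴴ * C) Dᴴ]
    rw [Matrix.trace_mul_comm]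
  rw [e]
  exact aux_trace_re_conjT_nonneg _

lemma aux_psd_trace_re_zero {A : Matrix n n ℂ} (hA : A.PosSemidef)
    (h : (A.trace).re = 0) : A = 0 := by
  obtain ⟨B, rfl⟩ := (show ∃ C : Matrix n n ℂ, A = Cᴴ * C from by open scoped MatrixOrder in exact CStarAlgebra.nonneg_iff_eq_star_mul_self.mp hA.nonneg)
  rw [aux_trace_re_conjT_eq_zero h]
  simp

lemma POVM.dist_nonneg (M : POVM n) {ρ : Matrix n n ℂ} (hρ : ρ.PosSemidef) (z : M.ι) :
    0 ≤ M.dist ρ z :=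
  aux_tr2_nonneg hρ (M.pos z)

lemma POVM.dist_sum (M : POVM n) (ρ : Matrix n n ℂ) :
    ∑ z, M.dist ρ z = (ρ.trace).re := by
  unfold POVM.dist
  rw [← Complex.re_sum, ← Matrix.trace_sum, ← Finset.mul_sum, M.sum_one, mul_one]

end Aux
section Holder
set_option linter.unusedSectionVars false
variable {Z : Type} [Fintype Z]

lemma holder_sum {β : ℝ} (hβ0 : 0 < β) (hβ1 : β < 1) (x y : Z → ℝ)
    (hx : ∀ z, 0 ≤ x z) (hy : ∀ z, 0 ≤ y z) :
    ∑ z, x z ^ β * y z ^ (1 - β) ≤ (∑ z, x z) ^ β * (∑ z, y z) ^ (1 - β) := by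
  set S := ∑ z, x z with hS
  set T := ∑ z, y z with hT
  have hS0 : 0 ≤ S := Finset.sum_nonneg fun z _ => hx z
  have hT0 : 0 ≤ T := Finset.sum_nonneg fun z _ => hy z
  rcases eq_or_lt_of_le hS0 with hS' | hS'
  · have hx0 : ∀ z, x z = 0 := by
      intro z
      have := (Finset.sum_eq_zero_iff_of_nonneg (fun z _ => hx z)).1 hS'.symm
      exact this z (Finset.mem_univ z)
    have : ∀ z ∈ Finset.univ, x z ^ β * y z ^ (1-β) = 0 := by
      intro z _; rw [hx0 z, Real.zero_rpow hβ0.ne', zero_mul]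
    rw [Finset.sum_eq_zero this]
    positivity
  rcases eq_or_lt_of_le hT0 with hT' | hT'
  · have hy0 : ∀ z, y z = 0 := by
      intro z
      have := (Finset.sum_eq_zero_iff_of_nonneg (fun z _ => hy z)).1 hT'.symm
      exact this z (Finset.mem_univ z)
    have : ∀ z ∈ Finset.univ, x z ^ β * y z ^ (1-β) = 0 := by
      intro z _; rw [hy0 z, Real.zero_rpow (by linarith), mul_zero]
    rw [Finset.sum_eq_zero this]
    positivity
  have key : ∀ z, x z ^ β * y z ^ (1 - β) ≤
      S ^ β * T ^ (1-β) * (β * (x z / S) + (1-β) * (y z / T)) := by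
    intro z
    have h1 : (x z / S) ^ β * (y z / T) ^ (1-β) ≤ β * (x z / S) + (1-β) * (y z / T) :=
      Real.geom_mean_le_arith_mean2_weighted hβ0.le (by linarith)
        (div_nonneg (hx z) hS0) (div_nonneg (hy z) hT0) (by ring)
    have h2 : (x z / S) ^ β * (y z / T) ^ (1-β)
        = x z ^ β * y z ^ (1-β) / (S ^ β * T ^ (1-β)) := by
      rw [Real.div_rpow (hx z) hS0, Real.div_rpow (hy z) hT0]; ring
    rw [h2, div_le_iff₀ (by positivity)] at h1
    calc x z ^ β * y z ^ (1-β) ≤ (β * (x z / S) + (1-β) * (y z / T)) * (S ^ β * T ^ (1-β)) := h1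
    _ = S ^ β * T ^ (1-β) * (β * (x z / S) + (1-β) * (y z / T)) := by ring
  calc ∑ z, x z ^ β * y z ^ (1-β)
      ≤ ∑ z, S ^ β * T ^ (1-β) * (β * (x z / S) + (1-β) * (y z / T)) :=
        Finset.sum_le_sum fun z _ => key z
    _ = S ^ β * T ^ (1-β) * (β * (S / S) + (1-β) * (T / T)) := by
        rw [← Finset.mul_sum]; congr 1
        rw [Finset.sum_add_distrib, ← Finset.mul_sum, ← Finset.mul_sum,
          ← Finset.sum_div, ← Finset.sum_div]
    _ = S ^ β * T ^ (1-β) := by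
        rw [div_self hS'.ne', div_self hT'.ne']; ring

lemma holder_two {β : ℝ} (hβ0 : 0 < β) (hβ1 : β < 1) {a b c d : ℝ}
    (ha : 0 ≤ a) (hb : 0 ≤ b) (hc : 0 ≤ c) (hd : 0 ≤ d) :
    a ^ β * b ^ (1-β) + c ^ β * d ^ (1-β) ≤ (a + c) ^ β * (b + d) ^ (1-β) := by
  have := holder_sum (Z := Bool) hβ0 hβ1 (fun z => if z then a else c)
    (fun z => if z then b else d) (by intro z; cases z <;> simpa)
    (by intro z; cases z <;> simpa)
  simpa [Fintype.sum_bool] using this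

lemma qsum_le_one {t : ℝ} (ht0 : 0 < t) (ht1 : t < 1) (μ ν : Z → ℝ)
    (hμ : ∀ z, 0 ≤ μ z) (hν : ∀ z, 0 ≤ ν z)
    (hμ1 : ∑ z, μ z = 1) (hν1 : ∑ z, ν z = 1) :
    ∑ z, μ z ^ t * ν z ^ (1 - t) ≤ 1 := by
  have := holder_sum ht0 ht1 μ ν hμ hν
  rwa [hμ1, hν1, Real.one_rpow, Real.one_rpow, mul_one] at this

lemma one_le_qsum {t : ℝ} (ht : 1 < t) (μ ν : Z → ℝ)
    (hμ : ∀ z, 0 ≤ μ z) (hν : ∀ z, 0 ≤ ν z)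
    (hμ1 : ∑ z, μ z = 1) (hν1 : ∑ z, ν z = 1)
    (hac : ∀ z, ν z = 0 → μ z = 0) :
    1 ≤ ∑ z, μ z ^ t * ν z ^ (1 - t) := by
  have ht0 : (0:ℝ) < t := lt_trans one_pos ht
  set Q := ∑ z, μ z ^ t * ν z ^ (1-t) with hQ
  have hQ0 : 0 ≤ Q := Finset.sum_nonneg fun z _ => mul_nonneg (Real.rpow_nonneg (hμ z) _) (Real.rpow_nonneg (hν z) _)
  have hβ0 : 0 < 1/t := by positivity
  have hβ1 : 1/t < 1 := by rw [div_lt_one ht0]; exact ht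
  have key : ∀ z, (μ z ^ t * ν z ^ (1-t)) ^ (1/t) * ν z ^ (1 - 1/t) = μ z := by
    intro z
    rcases eq_or_lt_of_le (hν z) with h0 | hpos
    · rw [← h0, hac z h0.symm, Real.zero_rpow (by linarith : (1-t:ℝ) ≠ 0),
        Real.zero_rpow ht0.ne', zero_mul, Real.zero_rpow (by positivity : (1/t:ℝ) ≠ 0), zero_mul]
    · have e1 : (μ z ^ t) ^ (1/t) = μ z := by
        rw [← Real.rpow_mul (hμ z), mul_one_div_cancel ht0.ne', Real.rpow_one]
      have e2 : (ν z ^ (1-t)) ^ (1/t) * ν z ^ (1 - 1/t) = 1 := by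
        rw [← Real.rpow_mul hpos.le, ← Real.rpow_add hpos,
          show (1-t) * (1/t) + (1 - 1/t) = 0 by field_simp; ring, Real.rpow_zero]
      rw [Real.mul_rpow (Real.rpow_nonneg (hμ z) _) (Real.rpow_nonneg (hν z) _),
        mul_assoc, e1, e2, mul_one]
  have h := holder_sum hβ0 hβ1 (fun z => μ z ^ t * ν z ^ (1-t)) ν
    (fun z => mul_nonneg (Real.rpow_nonneg (hμ z) _) (Real.rpow_nonneg (hν z) _)) hν
  simp only [key] at h
  rw [hμ1, hν1, Real.one_rpow, mul_one] at h
  by_contra hlt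
  push_neg at hlt
  have := Real.rpow_lt_one hQ0 hlt hβ0
  rw [hQ] at this
  linarith

lemma two_point_gt1 {t a1 b1 a2 b2 : ℝ} (ht : 1 < t)
    (ha1 : 0 ≤ a1) (hb1 : 0 ≤ b1) (ha2 : 0 ≤ a2) (hb2 : 0 ≤ b2)
    (h1 : b1 = 0 → a1 = 0) (h2 : b2 = 0 → a2 = 0) :
    (a1 + a2) ^ t * (b1 + b2) ^ (1 - t) ≤ a1 ^ t * b1 ^ (1-t) + a2 ^ t * b2 ^ (1-t) := by
  have ht0 : (0:ℝ) < t := lt_trans one_pos ht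
  have hβ0 : 0 < 1/t := by positivity
  have hβ1 : 1/t < 1 := by rw [div_lt_one ht0]; exact ht
  rcases eq_or_lt_of_le (by positivity : (0:ℝ) ≤ b1 + b2) with hB | hB
  · have hb1' : b1 = 0 := by linarith
    have hb2' : b2 = 0 := by linarith
    rw [h1 hb1', h2 hb2', hb1', hb2']
    simp [Real.zero_rpow ht0.ne']
  · set T := a1 ^ t * b1 ^ (1-t) + a2 ^ t * b2 ^ (1-t) with hT
    have hT0 : 0 ≤ T := add_nonneg
      (mul_nonneg (Real.rpow_nonneg ha1 _) (Real.rpow_nonneg hb1 _))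
      (mul_nonneg (Real.rpow_nonneg ha2 _) (Real.rpow_nonneg hb2 _))
    have key : ∀ a b : ℝ, 0 ≤ a → 0 ≤ b → (b = 0 → a = 0) →
        (a ^ t * b ^ (1-t)) ^ (1/t) * b ^ (1 - 1/t) = a := by
      intro a b ha hb hab
      rcases eq_or_lt_of_le hb with h0 | hpos
      · rw [← h0, hab h0.symm, Real.zero_rpow (by linarith : (1-t:ℝ) ≠ 0),
          Real.zero_rpow ht0.ne', zero_mul, Real.zero_rpow (by positivity : (1/t:ℝ) ≠ 0), zero_mul]
      · have e1 : (a ^ t) ^ (1/t) = a := by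
          rw [← Real.rpow_mul ha, mul_one_div_cancel ht0.ne', Real.rpow_one]
        have e2 : (b ^ (1-t)) ^ (1/t) * b ^ (1 - 1/t) = 1 := by
          rw [← Real.rpow_mul hpos.le, ← Real.rpow_add hpos,
            show (1-t) * (1/t) + (1 - 1/t) = 0 by field_simp; ring, Real.rpow_zero]
        rw [Real.mul_rpow (Real.rpow_nonneg ha _) (Real.rpow_nonneg hb _),
          mul_assoc, e1, e2, mul_one]
    have h := holder_two hβ0 hβ1 (a := a1 ^ t * b1 ^ (1-t)) (b := b1)
      (c := a2 ^ t * b2 ^ (1-t)) (d := b2)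
      (mul_nonneg (Real.rpow_nonneg ha1 _) (Real.rpow_nonneg hb1 _)) hb1
      (mul_nonneg (Real.rpow_nonneg ha2 _) (Real.rpow_nonneg hb2 _)) hb2
    rw [key a1 b1 ha1 hb1 h1, key a2 b2 ha2 hb2 h2] at h
    have h3 : (a1 + a2) ^ t ≤ T * (b1 + b2) ^ (t - 1) := by
      calc (a1 + a2) ^ t ≤ ((T) ^ (1/t) * (b1+b2) ^ (1-1/t)) ^ t :=
            Real.rpow_le_rpow (by positivity) h ht0.le
        _ = T * (b1 + b2) ^ (t-1) := by
            rw [Real.mul_rpow (Real.rpow_nonneg hT0 _) (Real.rpow_nonneg hB.le _),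
              ← Real.rpow_mul hT0, ← Real.rpow_mul hB.le,
              one_div_mul_cancel ht0.ne', Real.rpow_one,
              show (1 - 1/t) * t = t - 1 by field_simp]
    calc (a1 + a2) ^ t * (b1 + b2) ^ (1-t)
        ≤ (T * (b1 + b2) ^ (t-1)) * (b1 + b2) ^ (1-t) := by
          apply mul_le_mul_of_nonneg_right h3 (Real.rpow_nonneg hB.le _)
      _ = T := by
          rw [mul_assoc, ← Real.rpow_add hB, show t - 1 + (1-t) = 0 by ring,
            Real.rpow_zero, mul_one]

lemma xlog_lb {x y : ℝ} (hx : 0 ≤ x) (hy : 0 ≤ y) (hy1 : y ≤ 1) (hxy : y = 0 → x = 0) :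
    -1 ≤ x * Real.log (x / y) := by
  rcases eq_or_lt_of_le hy with h0 | hy0
  · rw [hxy h0.symm]; norm_num
  rcases eq_or_lt_of_le hx with h0 | hx0
  · rw [← h0]; norm_num
  have hlogx : 1 - x⁻¹ ≤ Real.log x := by
    have := Real.log_le_sub_one_of_pos (show (0:ℝ) < x⁻¹ by positivity)
    rw [Real.log_inv] at this
    linarith
  have hlogy : Real.log y ≤ 0 := Real.log_nonpos hy0.le hy1
  rw [Real.log_div hx0.ne' hy0.ne']
  have h1 : x - 1 ≤ x * Real.log x := by
    have := mul_le_mul_of_nonneg_left hlogx hx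
    calc x - 1 = x * (1 - x⁻¹) := by field_simp
      _ ≤ x * Real.log x := this
  nlinarith [mul_nonneg hx (neg_nonneg.2 hlogy), h1]

lemma log_sum_general (a b : Z → ℝ) (ha : ∀ z, 0 ≤ a z) (hb : ∀ z, 0 ≤ b z)
    (hab : ∀ z, b z = 0 → a z = 0) :
    (∑ z, a z) * Real.log ((∑ z, a z) / (∑ z, b z)) ≤ ∑ z, a z * Real.log (a z / b z) := by
  set A := ∑ z, a z with hA
  set B := ∑ z, b z with hB
  have hA0 : 0 ≤ A := Finset.sum_nonneg fun z _ => ha z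
  rcases eq_or_lt_of_le hA0 with h0 | hA0'
  · have ha0 : ∀ z, a z = 0 := fun z =>
      (Finset.sum_eq_zero_iff_of_nonneg (fun z _ => ha z)).1 h0.symm z (Finset.mem_univ z)
    rw [← h0, zero_mul]
    apply Finset.sum_nonneg
    intro z _; rw [ha0 z, zero_mul]
  · obtain ⟨z0, -, hz0⟩ : ∃ z ∈ Finset.univ, 0 < a z := by
      by_contra hc
      push_neg at hc
      have : A ≤ 0 := Finset.sum_nonpos fun z hz => hc z hz
      linarith
    have hbz0 : 0 < b z0 := (hb z0).lt_of_ne' fun h => by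
      have := hab z0 h; linarith
    have hB0 : 0 < B := lt_of_lt_of_le hbz0 (Finset.single_le_sum (fun z _ => hb z) (Finset.mem_univ z0))
    have key : ∀ z, a z * Real.log (A/B) + a z - (A/B) * b z ≤ a z * Real.log (a z / b z) := by
      intro z
      rcases eq_or_lt_of_le (ha z) with h0 | haz
      · rw [← h0]
        simp only [zero_mul, zero_add, zero_sub]
        have : 0 ≤ (A/B) * b z := mul_nonneg (div_nonneg hA0 hB0.le) (hb z)
        linarith
      · have hbz : 0 < b z := (hb z).lt_of_ne' fun h => by
          have := hab z h; linarith
        have hratio : 0 < b z * A / (a z * B) := by positivity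
        have hlog := Real.log_le_sub_one_of_pos hratio
        have e1 : Real.log (a z / b z) = Real.log (A/B) + Real.log ((a z * B) / (b z * A)) := by
          rw [Real.log_div (by positivity : (a z * B) ≠ 0) (by positivity : (b z * A) ≠ 0),
            Real.log_div haz.ne' hbz.ne', Real.log_div hA0'.ne' hB0.ne',
            Real.log_mul haz.ne' hB0.ne', Real.log_mul hbz.ne' hA0'.ne']
          ring
        have e2 : Real.log ((a z * B) / (b z * A)) = - Real.log (b z * A / (a z * B)) := by
          rw [← Real.log_inv]
          congr 1
          field_simp
        have h3 : 1 - b z * A / (a z * B) ≤ Real.log ((a z * B) / (b z * A)) := by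
          rw [e2]; linarith
        have h4 := mul_le_mul_of_nonneg_left h3 haz.le
        rw [e1, mul_add]
        have e3 : a z * (b z * A / (a z * B)) = (A/B) * b z := by
          field_simp
        rw [mul_sub, mul_one, e3] at h4
        linarith
    calc A * Real.log (A/B) = ∑ z, (a z * Real.log (A/B) + a z - (A/B) * b z) := by
          rw [Finset.sum_sub_distrib, Finset.sum_add_distrib, ← Finset.sum_mul, ← Finset.mul_sum,
            ← hA, ← hB]
          field_simp
          ring
      _ ≤ ∑ z, a z * Real.log (a z / b z) := Finset.sum_le_sum fun z _ => key z

lemma log_sum_two {a1 b1 a2 b2 : ℝ}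
    (ha1 : 0 ≤ a1) (hb1 : 0 ≤ b1) (ha2 : 0 ≤ a2) (hb2 : 0 ≤ b2)
    (h1 : b1 = 0 → a1 = 0) (h2 : b2 = 0 → a2 = 0) :
    (a1 + a2) * Real.log ((a1 + a2) / (b1 + b2)) ≤
      a1 * Real.log (a1 / b1) + a2 * Real.log (a2 / b2) := by
  have := log_sum_general (Z := Bool) (fun z => if z then a1 else a2)
    (fun z => if z then b1 else b2) (by intro z; cases z <;> simpa)
    (by intro z; cases z <;> simpa) (by intro z; cases z <;> simpa)
  simpa [Fintype.sum_bool] using this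

end Holder
section Core1
set_option linter.unusedSectionVars false
set_option maxHeartbeats 1000000
variable {Z : Type} [Fintype Z]

lemma exists_ne_zero_of_sum_one {c : Z → ℝ} (hc1 : ∑ z, c z = 1) : ∃ z, c z ≠ 0 := by
  by_contra h
  push_neg at h
  rw [Finset.sum_eq_zero (fun z _ => h z)] at hc1
  norm_num at hc1

lemma Dmax_nonneg (μ ν : Z → ℝ) (hμ0 : ∀ z, 0 ≤ μ z) (hν0 : ∀ z, 0 ≤ ν z)
    (hμ1 : ∑ z, μ z = 1) (hν1 : ∑ z, ν z = 1) : 0 ≤ Dmax μ ν := by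
  obtain ⟨z0, hz0, hle⟩ : ∃ z, μ z ≠ 0 ∧ ν z ≤ μ z := by
    by_contra hc
    push_neg at hc
    obtain ⟨z1, hz1⟩ := exists_ne_zero_of_sum_one hμ1
    have hlt : ∑ z, μ z < ∑ z, ν z := by
      apply Finset.sum_lt_sum (fun z _ => ?_) ⟨z1, Finset.mem_univ z1, hc z1 hz1⟩
      rcases eq_or_ne (μ z) 0 with h | h
      · rw [h]; exact hν0 z
      · exact (hc z h).le
    rw [hμ1, hν1] at hlt
    exact lt_irrefl _ hlt
  have hterm : (0:EReal) ≤ if ν z0 = 0 then (⊤:EReal) else ((Real.log (μ z0 / ν z0) : ℝ) : EReal) := by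
    split_ifs with h
    · exact le_top
    · have hν0' : 0 < ν z0 := (hν0 z0).lt_of_ne' h
      exact EReal.coe_nonneg.mpr (Real.log_nonneg ((one_le_div hν0').mpr hle))
  exact le_trans hterm (le_iSup (fun z : {z : Z // μ z ≠ 0} =>
    if ν z.1 = 0 then (⊤:EReal) else ((Real.log (μ z.1 / ν z.1) : ℝ) : EReal)) ⟨z0, hz0⟩)

lemma rdiv_nonneg (α : EReal) (hα : 0 < α) (μ ν : Z → ℝ)
    (hμ0 : ∀ z, 0 ≤ μ z) (hν0 : ∀ z, 0 ≤ ν z)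
    (hμ1 : ∑ z, μ z = 1) (hν1 : ∑ z, ν z = 1) : 0 ≤ rdiv α μ ν := by
  induction α using EReal.rec with
  | bot => exact absurd hα (by simp)
  | top =>
    rw [rdiv, if_pos rfl]
    exact Dmax_nonneg μ ν hμ0 hν0 hμ1 hν1
  | coe t =>
    have ht0 : 0 < t := EReal.coe_pos.mp hα
    rw [rdiv, if_neg (EReal.coe_ne_top t)]
    rcases eq_or_ne t 1 with rfl | ht1
    · rw [if_pos (by exact_mod_cast rfl)]
      split_ifs with hac
      · apply EReal.coe_nonneg.mpr
        have := log_sum_general μ ν hμ0 hν0 hac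
        rw [hμ1, hν1] at this
        simpa using this
      · exact le_top
    · rw [if_neg (by exact_mod_cast ht1)]
      rcases lt_or_gt_of_ne ht1 with hlt | hgt
      · rw [if_neg (by exact_mod_cast not_lt.mpr hlt.le)]
        split_ifs with hex
        · apply EReal.coe_nonneg.mpr
          rw [EReal.toReal_coe]
          have hQ1 : Qclass t μ ν ≤ 1 := qsum_le_one ht0 hlt μ ν hμ0 hν0 hμ1 hν1
          have hQ0 : 0 ≤ Qclass t μ ν := Finset.sum_nonneg fun z _ =>
            mul_nonneg (Real.rpow_nonneg (hμ0 z) _) (Real.rpow_nonneg (hν0 z) _)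
          have hlog : Real.log (Qclass t μ ν) ≤ 0 := Real.log_nonpos hQ0 hQ1
          have hinv : (t - 1)⁻¹ ≤ 0 := inv_nonpos.mpr (by linarith)
          nlinarith
        · exact le_top
      · rw [if_pos (by exact_mod_cast hgt)]
        split_ifs with hac
        · apply EReal.coe_nonneg.mpr
          rw [EReal.toReal_coe]
          have hQ1 : 1 ≤ Qclass t μ ν := one_le_qsum hgt μ ν hμ0 hν0 hμ1 hν1 hac
          have hlog : 0 ≤ Real.log (Qclass t μ ν) := Real.log_nonneg hQ1
          have hinv : 0 ≤ (t - 1)⁻¹ := inv_nonneg.mpr (by linarith)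
          exact mul_nonneg hinv hlog
        · exact le_top

lemma rdiv_self (α : EReal) (hα : 0 < α) (c : Z → ℝ)
    (hc0 : ∀ z, 0 ≤ c z) (hc1 : ∑ z, c z = 1) : rdiv α c c = 0 := by
  obtain ⟨z1, hz1⟩ := exists_ne_zero_of_sum_one hc1
  induction α using EReal.rec with
  | bot => exact absurd hα (by simp)
  | top =>
    rw [rdiv, if_pos rfl]
    apply le_antisymm
    · apply iSup_le
      rintro ⟨z, hz⟩
      rw [if_neg hz, div_self hz, Real.log_one]
      exact le_refl _
    · exact Dmax_nonneg c c hc0 hc0 hc1 hc1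
  | coe t =>
    have ht0 : 0 < t := EReal.coe_pos.mp hα
    rw [rdiv, if_neg (EReal.coe_ne_top t)]
    rcases eq_or_ne t 1 with rfl | ht1
    · rw [if_pos (by exact_mod_cast rfl), if_pos (fun z h => h)]
      norm_cast
      apply Finset.sum_eq_zero
      intro z _
      rcases eq_or_ne (c z) 0 with h | h
      · rw [h, zero_mul]
      · rw [div_self h, Real.log_one, mul_zero]
    · have hQ : Qclass t c c = 1 := by
        have e : ∀ z ∈ Finset.univ, c z ^ t * c z ^ (1-t) = c z := by
          intro z _
          rcases eq_or_lt_of_le (hc0 z) with h | h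
          · rw [← h, Real.zero_rpow ht0.ne', zero_mul]
          · rw [← Real.rpow_add h, show t + (1-t) = 1 by ring, Real.rpow_one]
        rw [Qclass, Finset.sum_congr rfl e, hc1]
      rw [if_neg (by exact_mod_cast ht1)]
      rcases lt_or_gt_of_ne ht1 with hlt | hgt
      · rw [if_neg (by exact_mod_cast not_lt.mpr hlt.le), if_pos ⟨z1, hz1, hz1⟩,
          EReal.toReal_coe, hQ, Real.log_one, mul_zero]
        norm_cast
      · rw [if_pos (by exact_mod_cast hgt), if_pos (fun z h => h),
          EReal.toReal_coe, hQ, Real.log_one, mul_zero]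
        norm_cast

end Core1
section GoalA
set_option linter.unusedSectionVars false
set_option maxHeartbeats 1000000
variable {Z : Type} [Fintype Z]

lemma goalA (α : EReal) (hα : 0 < α) (μ ν c : Z → ℝ)
    (hμ0 : ∀ z, 0 ≤ μ z) (hν0 : ∀ z, 0 ≤ ν z) (hc0 : ∀ z, 0 ≤ c z)
    (hμ1 : ∑ z, μ z = 1) (hν1 : ∑ z, ν z = 1) (hc1 : ∑ z, c z = 1)
    (hcμ : ∀ z, c z = 0 → μ z = 0) (hcν : ∀ z, c z = 0 → ν z = 0)
    {ε : ℝ} (hε0 : 0 < ε) (hε1 : ε ≤ 1) :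
    rdiv α (fun z => (1-ε) * μ z + ε * c z) (fun z => (1-ε) * ν z + ε * c z)
      ≤ rdiv α μ ν := by
  rcases eq_or_lt_of_le hε1 with rfl | hε1'
  · have e1 : (fun z => (1-(1:ℝ)) * μ z + 1 * c z) = c := by funext z; ring
    have e2 : (fun z => (1-(1:ℝ)) * ν z + 1 * c z) = c := by funext z; ring
    rw [e1, e2, rdiv_self α hα c hc0 hc1]
    exact rdiv_nonneg α hα μ ν hμ0 hν0 hμ1 hν1
  have h1ε : 0 < 1 - ε := by linarith
  set μ' : Z → ℝ := fun z => (1-ε) * μ z + ε * c z with hμ'def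
  set ν' : Z → ℝ := fun z => (1-ε) * ν z + ε * c z with hν'def
  have hμ'e : ∀ z, μ' z = (1-ε) * μ z + ε * c z := fun z => rfl
  have hν'e : ∀ z, ν' z = (1-ε) * ν z + ε * c z := fun z => rfl
  have hμ'0 : ∀ z, 0 ≤ μ' z := fun z =>
    add_nonneg (mul_nonneg h1ε.le (hμ0 z)) (mul_nonneg hε0.le (hc0 z))
  have hν'0 : ∀ z, 0 ≤ ν' z := fun z =>
    add_nonneg (mul_nonneg h1ε.le (hν0 z)) (mul_nonneg hε0.le (hc0 z))
  have hμ'1 : ∑ z, μ' z = 1 := by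
    simp only [hμ'e]
    rw [Finset.sum_add_distrib, ← Finset.mul_sum, ← Finset.mul_sum, hμ1, hc1]
    ring
  have hν'1 : ∑ z, ν' z = 1 := by
    simp only [hν'e]
    rw [Finset.sum_add_distrib, ← Finset.mul_sum, ← Finset.mul_sum, hν1, hc1]
    ring
  have hsplit : ∀ z, ν' z = 0 → ν z = 0 ∧ c z = 0 := by
    intro z h
    rw [hν'e] at h
    have h2 := (add_eq_zero_iff_of_nonneg (mul_nonneg h1ε.le (hν0 z))
      (mul_nonneg hε0.le (hc0 z))).mp h
    constructor
    · have := h2.1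
      rcases mul_eq_zero.mp this with h3 | h3
      · linarith
      · exact h3
    · rcases mul_eq_zero.mp h2.2 with h3 | h3
      · linarith
      · exact h3
  have hac' : ∀ z, ν' z = 0 → μ' z = 0 := by
    intro z h
    obtain ⟨hν, hc⟩ := hsplit z h
    rw [hμ'e, hcμ z hc, hc]
    ring
  have hcpos : ∀ z, μ z ≠ 0 → 0 < c z := by
    intro z h
    exact (hc0 z).lt_of_ne' fun h0 => h (hcμ z h0)
  induction α using EReal.rec with
  | bot => exact absurd hα (by simp)
  | top =>
    rw [rdiv, rdiv, if_pos rfl, if_pos rfl]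
    apply iSup_le
    rintro ⟨z, hz⟩
    have hν'z : ν' z ≠ 0 := fun h => hz (hac' z h)
    rw [if_neg hν'z]
    have hν'zpos : 0 < ν' z := (hν'0 z).lt_of_ne' hν'z
    have hμ'zpos : 0 < μ' z := (hμ'0 z).lt_of_ne' hz
    by_cases hνz : ν z = 0
    · by_cases hμz : μ z = 0
      · -- ratio = 1
        have hcz : 0 < c z := by
          have h5 := hμ'zpos
          rw [hμ'e, hμz] at h5
          nlinarith
        have hval : (0:ℝ) < (1-ε) * 0 + ε * c z := by nlinarith
        have : μ' z / ν' z = 1 := by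
          rw [hμ'e, hν'e, hμz, hνz, div_self hval.ne']
        rw [this, Real.log_one]
        exact_mod_cast Dmax_nonneg μ ν hμ0 hν0 hμ1 hν1
      · -- RHS is ⊤
        have htop : (⊤:EReal) ≤ Dmax μ ν := by
          have := le_iSup (fun z : {z : Z // μ z ≠ 0} =>
            if ν z.1 = 0 then (⊤:EReal) else ((Real.log (μ z.1 / ν z.1) : ℝ) : EReal)) ⟨z, hμz⟩
          rw [if_pos hνz] at this
          exact this
        exact le_trans le_top (le_trans htop (le_refl _))
    · have hνzpos : 0 < ν z := (hν0 z).lt_of_ne' hνz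
      by_cases hμz : μ z = 0
      · have hle : μ' z ≤ ν' z := by
          rw [hμ'e, hν'e, hμz]
          nlinarith [hν0 z]
        have : Real.log (μ' z / ν' z) ≤ 0 :=
          Real.log_nonpos (div_nonneg (hμ'0 z) (hν'0 z)) ((div_le_one hν'zpos).mpr hle)
        calc ((Real.log (μ' z / ν' z) : ℝ) : EReal) ≤ ((0:ℝ) : EReal) := EReal.coe_le_coe_iff.mpr this
          _ = (0:EReal) := by norm_cast
          _ ≤ Dmax μ ν := Dmax_nonneg μ ν hμ0 hν0 hμ1 hν1
      · have hμzpos : 0 < μ z := (hμ0 z).lt_of_ne' hμz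
        have hcz : 0 < c z := hcpos z hμz
        rcases le_total (μ z / ν z) 1 with hM | hM
        · -- ratio ≤ 1
          have hle : μ' z ≤ ν' z := by
            have : μ z ≤ ν z := (div_le_one hνzpos).mp hM
            rw [hμ'e, hν'e]
            nlinarith
          have : Real.log (μ' z / ν' z) ≤ 0 :=
            Real.log_nonpos (div_nonneg (hμ'0 z) (hν'0 z)) ((div_le_one hν'zpos).mpr hle)
          calc ((Real.log (μ' z / ν' z) : ℝ) : EReal) ≤ ((0:ℝ) : EReal) := EReal.coe_le_coe_iff.mpr this
            _ = (0:EReal) := by norm_cast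
            _ ≤ Dmax μ ν := Dmax_nonneg μ ν hμ0 hν0 hμ1 hν1
        · -- ratio ≤ μ z / ν z
          have hle : μ' z ≤ (μ z / ν z) * ν' z := by
            have e1 : μ z = (μ z / ν z) * ν z := by field_simp
            have e2 : c z ≤ (μ z / ν z) * c z := by nlinarith
            rw [hμ'e, hν'e]
            nlinarith
          have hlog : Real.log (μ' z / ν' z) ≤ Real.log (μ z / ν z) := by
            apply Real.log_le_log (by positivity)
            rw [div_le_div_iff₀ hν'zpos hνzpos]
            calc μ' z * ν z ≤ ((μ z / ν z) * ν' z) * ν z :=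
                  mul_le_mul_of_nonneg_right hle hνzpos.le
              _ = μ z * ν' z := by field_simp
          have hterm : ((Real.log (μ z / ν z) : ℝ) : EReal) ≤ Dmax μ ν := by
            have := le_iSup (fun z : {z : Z // μ z ≠ 0} =>
              if ν z.1 = 0 then (⊤:EReal) else ((Real.log (μ z.1 / ν z.1) : ℝ) : EReal)) ⟨z, hμz⟩
            rw [if_neg hνz] at this
            exact this
          exact le_trans (EReal.coe_le_coe_iff.mpr hlog) hterm
  | coe t =>
    have ht0 : 0 < t := EReal.coe_pos.mp hα
    rw [rdiv, rdiv, if_neg (EReal.coe_ne_top t), if_neg (EReal.coe_ne_top t)]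
    rcases eq_or_ne t 1 with rfl | ht1
    · -- KL case
      rw [if_pos EReal.coe_one, if_pos EReal.coe_one, if_pos hac']
      by_cases hac : ∀ z, ν z = 0 → μ z = 0
      · rw [if_pos hac]
        apply EReal.coe_le_coe_iff.mpr
        have key : ∀ z, μ' z * Real.log (μ' z / ν' z) ≤ (1-ε) * (μ z * Real.log (μ z / ν z)) := by
          intro z
          have hb1 : (1-ε) * ν z = 0 → (1-ε) * μ z = 0 := by
            intro h
            rcases mul_eq_zero.mp h with h3 | h3
            · linarith
            · rw [hac z h3, mul_zero]
          have hb2 : ε * c z = 0 → ε * c z = 0 := fun h => h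
          have := log_sum_two (mul_nonneg h1ε.le (hμ0 z)) (mul_nonneg h1ε.le (hν0 z))
            (mul_nonneg hε0.le (hc0 z)) (mul_nonneg hε0.le (hc0 z)) hb1 hb2
          rw [hμ'e, hν'e]
          have e2 : ε * c z * Real.log ((ε * c z) / (ε * c z)) = 0 := by
            rcases eq_or_ne (c z) 0 with h | h
            · rw [h]; simp
            · rw [div_self (by positivity : ε * c z ≠ 0), Real.log_one, mul_zero]
          have e1 : (1-ε) * μ z * Real.log (((1-ε) * μ z) / ((1-ε) * ν z))
              = (1-ε) * (μ z * Real.log (μ z / ν z)) := by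
            rcases eq_or_ne (μ z) 0 with h | h
            · rw [h]; ring_nf
            · rw [mul_div_mul_left _ _ h1ε.ne']; ring
          rw [e2, e1, add_zero] at this
          exact this
        have hKL : 0 ≤ ∑ z, μ z * Real.log (μ z / ν z) := by
          have := log_sum_general μ ν hμ0 hν0 hac
          rw [hμ1, hν1] at this
          simpa using this
        calc ∑ z, μ' z * Real.log (μ' z / ν' z)
            ≤ ∑ z, (1-ε) * (μ z * Real.log (μ z / ν z)) := Finset.sum_le_sum fun z _ => key z
          _ = (1-ε) * ∑ z, μ z * Real.log (μ z / ν z) := by rw [Finset.mul_sum]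
          _ ≤ ∑ z, μ z * Real.log (μ z / ν z) := by nlinarith
      · rw [if_neg hac]; exact le_top
    · rw [if_neg (by exact_mod_cast ht1 : ¬ ((t:ℝ):EReal) = 1),
        if_neg (by exact_mod_cast ht1 : ¬ ((t:ℝ):EReal) = 1)]
      rcases lt_or_gt_of_ne ht1 with hlt | hgt
      · -- 0 < t < 1
        have hnlt : ¬ (1:EReal) < (t:ℝ) := by exact_mod_cast not_lt.mpr hlt.le
        rw [if_neg hnlt, if_neg hnlt]
        obtain ⟨z1, hz1⟩ := exists_ne_zero_of_sum_one hμ1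
        have hcz1 : 0 < c z1 := hcpos z1 hz1
        have hμ'z1 : μ' z1 ≠ 0 := by
          have : 0 < μ' z1 := by
            rw [hμ'e]
            nlinarith [mul_nonneg h1ε.le (hμ0 z1), mul_pos hε0 hcz1]
          exact this.ne'
        have hν'z1 : ν' z1 ≠ 0 := by
          have : 0 < ν' z1 := by
            rw [hν'e]
            nlinarith [mul_nonneg h1ε.le (hν0 z1), mul_pos hε0 hcz1]
          exact this.ne'
        rw [if_pos ⟨z1, hμ'z1, hν'z1⟩]
        by_cases hex : ∃ z, μ z ≠ 0 ∧ ν z ≠ 0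
        · rw [if_pos hex]
          apply EReal.coe_le_coe_iff.mpr
          rw [EReal.toReal_coe]
          obtain ⟨z2, hμ2, hν2⟩ := hex
          have hQpos : 0 < Qclass t μ ν := by
            have hterm : 0 < μ z2 ^ t * ν z2 ^ (1-t) :=
              mul_pos (Real.rpow_pos_of_pos ((hμ0 z2).lt_of_ne' hμ2) _)
                (Real.rpow_pos_of_pos ((hν0 z2).lt_of_ne' hν2) _)
            exact lt_of_lt_of_le hterm (Finset.single_le_sum (fun z _ =>
              mul_nonneg (Real.rpow_nonneg (hμ0 z) _) (Real.rpow_nonneg (hν0 z) _))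
              (Finset.mem_univ z2))
          have key : ∀ z, (1-ε) * (μ z ^ t * ν z ^ (1-t)) + ε * c z ≤ μ' z ^ t * ν' z ^ (1-t) := by
            intro z
            have h := holder_two ht0 hlt (a := (1-ε) * μ z) (b := (1-ε) * ν z)
              (c := ε * c z) (d := ε * c z) (mul_nonneg h1ε.le (hμ0 z))
              (mul_nonneg h1ε.le (hν0 z)) (mul_nonneg hε0.le (hc0 z)) (mul_nonneg hε0.le (hc0 z))
            have e1 : ((1-ε) * μ z) ^ t * ((1-ε) * ν z) ^ (1-t) = (1-ε) * (μ z ^ t * ν z ^ (1-t)) := by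
              rw [Real.mul_rpow h1ε.le (hμ0 z), Real.mul_rpow h1ε.le (hν0 z),
                show (1-ε) ^ t * μ z ^ t * ((1-ε) ^ (1-t) * ν z ^ (1-t))
                  = ((1-ε) ^ t * (1-ε) ^ (1-t)) * (μ z ^ t * ν z ^ (1-t)) by ring,
                ← Real.rpow_add h1ε, show t + (1-t) = 1 by ring, Real.rpow_one]
            have e2 : (ε * c z) ^ t * (ε * c z) ^ (1-t) = ε * c z := by
              rcases eq_or_lt_of_le (hc0 z) with h0 | h0
              · rw [← h0, mul_zero, Real.zero_rpow ht0.ne', zero_mul]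
              · rw [← Real.rpow_add (by positivity), show t + (1-t) = 1 by ring, Real.rpow_one]
            rw [e1, e2] at h
            rw [hμ'e, hν'e]
            exact h
          have hQmix : (1-ε) * Qclass t μ ν + ε ≤ Qclass t μ' ν' := by
            have := Finset.sum_le_sum (fun z (_ : z ∈ Finset.univ) => key z)
            rw [Finset.sum_add_distrib, ← Finset.mul_sum, ← Finset.mul_sum, hc1, mul_one] at this
            exact this
          have hQ1 : Qclass t μ ν ≤ 1 := qsum_le_one ht0 hlt μ ν hμ0 hν0 hμ1 hν1
          have hQle : Qclass t μ ν ≤ Qclass t μ' ν' := by nlinarith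
          have hlog : Real.log (Qclass t μ ν) ≤ Real.log (Qclass t μ' ν') :=
            Real.log_le_log hQpos hQle
          have hinv : (t - 1)⁻¹ ≤ 0 := inv_nonpos.mpr (by linarith)
          nlinarith
        · rw [if_neg hex]; exact le_top
      · -- 1 < t
        have hlt' : (1:EReal) < (t:ℝ) := by exact_mod_cast hgt
        rw [if_pos hlt', if_pos hlt', if_pos hac']
        by_cases hac : ∀ z, ν z = 0 → μ z = 0
        · rw [if_pos hac]
          apply EReal.coe_le_coe_iff.mpr
          rw [EReal.toReal_coe]
          have key : ∀ z, μ' z ^ t * ν' z ^ (1-t) ≤ (1-ε) * (μ z ^ t * ν z ^ (1-t)) + ε * c z := by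
            intro z
            have hb1 : (1-ε) * ν z = 0 → (1-ε) * μ z = 0 := by
              intro h
              rcases mul_eq_zero.mp h with h3 | h3
              · linarith
              · rw [hac z h3, mul_zero]
            have h := two_point_gt1 hgt (mul_nonneg h1ε.le (hμ0 z)) (mul_nonneg h1ε.le (hν0 z))
              (mul_nonneg hε0.le (hc0 z)) (mul_nonneg hε0.le (hc0 z)) hb1 (fun h => h)
            have e1 : ((1-ε) * μ z) ^ t * ((1-ε) * ν z) ^ (1-t) = (1-ε) * (μ z ^ t * ν z ^ (1-t)) := by
              rw [Real.mul_rpow h1ε.le (hμ0 z), Real.mul_rpow h1ε.le (hν0 z),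
                show (1-ε) ^ t * μ z ^ t * ((1-ε) ^ (1-t) * ν z ^ (1-t))
                  = ((1-ε) ^ t * (1-ε) ^ (1-t)) * (μ z ^ t * ν z ^ (1-t)) by ring,
                ← Real.rpow_add h1ε, show t + (1-t) = 1 by ring, Real.rpow_one]
            have e2 : (ε * c z) ^ t * (ε * c z) ^ (1-t) = ε * c z := by
              rcases eq_or_lt_of_le (hc0 z) with h0 | h0
              · rw [← h0, mul_zero, Real.zero_rpow ht0.ne', zero_mul]
              · rw [← Real.rpow_add (by positivity), show t + (1-t) = 1 by ring, Real.rpow_one]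
            rw [e1, e2] at h
            rw [hμ'e, hν'e]
            exact h
          have hQmix : Qclass t μ' ν' ≤ (1-ε) * Qclass t μ ν + ε := by
            have := Finset.sum_le_sum (fun z (_ : z ∈ Finset.univ) => key z)
            rw [Finset.sum_add_distrib, ← Finset.mul_sum, ← Finset.mul_sum, hc1, mul_one] at this
            exact this
          have hQ1 : 1 ≤ Qclass t μ ν := one_le_qsum hgt μ ν hμ0 hν0 hμ1 hν1 hac
          have hQ1' : 1 ≤ Qclass t μ' ν' := one_le_qsum hgt μ' ν' hμ'0 hν'0 hμ'1 hν'1 hac'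
          have hQle : Qclass t μ' ν' ≤ Qclass t μ ν := by nlinarith
          have hlog : Real.log (Qclass t μ' ν') ≤ Real.log (Qclass t μ ν) :=
            Real.log_le_log (by linarith) hQle
          have hinv : 0 ≤ (t - 1)⁻¹ := inv_nonneg.mpr (by linarith)
          exact mul_le_mul_of_nonneg_left hlog hinv
        · rw [if_neg hac]; exact le_top

end GoalA
section Infra
open scoped Topology
set_option linter.unusedSectionVars false
set_option maxHeartbeats 1000000
variable {Z : Type} [Fintype Z]

lemma L01_neBot : (nhdsWithin (0:ℝ) (Set.Ioc (0:ℝ) 1)).NeBot := by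
  apply mem_closure_iff_nhdsWithin_neBot.mp
  rw [closure_Ioc (zero_ne_one (α := ℝ))]
  exact Set.mem_Icc.mpr ⟨le_refl 0, zero_le_one⟩

lemma tendsto_mix (u v : ℝ) :
    Tendsto (fun ε : ℝ => (1-ε)*u + ε*v) (nhdsWithin (0:ℝ) (Set.Ioc (0:ℝ) 1)) (𝓝 u) := by
  have hc : Continuous fun ε : ℝ => (1-ε)*u + ε*v := by continuity
  have h2 := hc.tendsto 0
  have h0 : (1-(0:ℝ))*u + 0*v = u := by ring
  rw [h0] at h2
  exact h2.mono_left nhdsWithin_le_nhds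

lemma aux_coe_tendsto_top {β : Type} {l : Filter β} {g : β → ℝ} (h : Tendsto g l atTop) :
    Tendsto (fun x => ((g x : ℝ) : EReal)) l (𝓝 ⊤) := by
  rw [EReal.tendsto_nhds_top_iff_real]
  intro x
  filter_upwards [h.eventually (eventually_gt_atTop x)] with b hb
  exact EReal.coe_lt_coe_iff.mpr hb

lemma le_Dmax (μ ν : Z → ℝ) (z : Z) (hz : μ z ≠ 0) (hν : ν z ≠ 0) :
    ((Real.log (μ z / ν z) : ℝ) : EReal) ≤ Dmax μ ν := by
  have := le_iSup (fun w : {w : Z // μ w ≠ 0} =>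
    if ν w.1 = 0 then (⊤:EReal) else ((Real.log (μ w.1 / ν w.1) : ℝ) : EReal)) ⟨z, hz⟩
  rw [if_neg hν] at this
  exact this

lemma rdiv_top_eq (μ ν : Z → ℝ) : rdiv ⊤ μ ν = Dmax μ ν := by
  rw [rdiv, if_pos rfl]

lemma rdiv_coe_one (μ ν : Z → ℝ) (hac : ∀ z, ν z = 0 → μ z = 0) :
    rdiv ((1:ℝ) : EReal) μ ν = (((∑ z, μ z * Real.log (μ z / ν z)) : ℝ) : EReal) := by
  rw [rdiv, if_neg (EReal.coe_ne_top 1), if_pos EReal.coe_one, if_pos hac]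

lemma rdiv_coe_one_top (μ ν : Z → ℝ) (hac : ¬ ∀ z, ν z = 0 → μ z = 0) :
    rdiv ((1:ℝ) : EReal) μ ν = ⊤ := by
  rw [rdiv, if_neg (EReal.coe_ne_top 1), if_pos EReal.coe_one, if_neg hac]

lemma rdiv_coe_gt1 {t : ℝ} (ht : 1 < t) (μ ν : Z → ℝ) (hac : ∀ z, ν z = 0 → μ z = 0) :
    rdiv (t : EReal) μ ν = (((t - 1)⁻¹ * Real.log (Qclass t μ ν) : ℝ) : EReal) := by
  rw [rdiv, if_neg (EReal.coe_ne_top t),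
    if_neg (by exact_mod_cast (by linarith : t ≠ 1) : ¬ ((t:ℝ):EReal) = 1),
    if_pos (by exact_mod_cast ht : (1:EReal) < (t:ℝ)), if_pos hac, EReal.toReal_coe]

lemma rdiv_coe_gt1_top {t : ℝ} (ht : 1 < t) (μ ν : Z → ℝ) (hac : ¬ ∀ z, ν z = 0 → μ z = 0) :
    rdiv (t : EReal) μ ν = ⊤ := by
  rw [rdiv, if_neg (EReal.coe_ne_top t),
    if_neg (by exact_mod_cast (by linarith : t ≠ 1) : ¬ ((t:ℝ):EReal) = 1),
    if_pos (by exact_mod_cast ht : (1:EReal) < (t:ℝ)), if_neg hac]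

lemma rdiv_coe_lt1 {t : ℝ} (ht : t < 1) (μ ν : Z → ℝ) (hex : ∃ z, μ z ≠ 0 ∧ ν z ≠ 0) :
    rdiv (t : EReal) μ ν = (((t - 1)⁻¹ * Real.log (Qclass t μ ν) : ℝ) : EReal) := by
  rw [rdiv, if_neg (EReal.coe_ne_top t),
    if_neg (by exact_mod_cast (by linarith : t ≠ 1) : ¬ ((t:ℝ):EReal) = 1),
    if_neg (by exact_mod_cast not_lt.mpr ht.le : ¬ (1:EReal) < (t:ℝ)), if_pos hex, EReal.toReal_coe]

lemma rdiv_coe_lt1_top {t : ℝ} (ht : t < 1) (μ ν : Z → ℝ) (hex : ¬ ∃ z, μ z ≠ 0 ∧ ν z ≠ 0) :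
    rdiv (t : EReal) μ ν = ⊤ := by
  rw [rdiv, if_neg (EReal.coe_ne_top t),
    if_neg (by exact_mod_cast (by linarith : t ≠ 1) : ¬ ((t:ℝ):EReal) = 1),
    if_neg (by exact_mod_cast not_lt.mpr ht.le : ¬ (1:EReal) < (t:ℝ)), if_neg hex]

lemma xlog_id {x y : ℝ} (hy : y ≠ 0) :
    x * Real.log (x / y) = x * Real.log x - x * Real.log y := by
  rcases eq_or_ne x 0 with rfl | hx
  · simp
  · rw [Real.log_div hx hy, mul_sub]

end Infra
section GoalB
open scoped Topology
set_option linter.unusedSectionVars false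
set_option maxHeartbeats 2000000
variable {Z : Type} [Fintype Z]

lemma mix_pos {w c : ℝ} (hw : 0 ≤ w) (hc : 0 < c) {ε : ℝ} (hε0 : 0 < ε) (hε1 : ε ≤ 1) :
    0 < (1-ε) * w + ε * c := by nlinarith

lemma mix_nonneg {w c : ℝ} (hw : 0 ≤ w) (hc : 0 ≤ c) {ε : ℝ} (hε0 : 0 < ε) (hε1 : ε ≤ 1) :
    0 ≤ (1-ε) * w + ε * c := by nlinarith

lemma goalB (α : EReal) (hα : 0 < α) (μ ν c : Z → ℝ)
    (hμ0 : ∀ z, 0 ≤ μ z) (hν0 : ∀ z, 0 ≤ ν z) (hc0 : ∀ z, 0 ≤ c z)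
    (hμ1 : ∑ z, μ z = 1) (hν1 : ∑ z, ν z = 1) (hc1 : ∑ z, c z = 1)
    (hcμ : ∀ z, c z = 0 → μ z = 0) (hcν : ∀ z, c z = 0 → ν z = 0)
    (S : EReal)
    (hS : ∀ ε : ℝ, 0 < ε → ε ≤ 1 →
      rdiv α (fun z => (1-ε) * μ z + ε * c z) (fun z => (1-ε) * ν z + ε * c z) ≤ S) :
    rdiv α μ ν ≤ S := by
  haveI : (nhdsWithin (0:ℝ) (Set.Ioc (0:ℝ) 1)).NeBot := L01_neBot
  have hevIoc : ∀ᶠ ε in (nhdsWithin (0:ℝ) (Set.Ioc (0:ℝ) 1)), ε ∈ Set.Ioc (0:ℝ) 1 := eventually_mem_nhdsWithin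
  have hcpos : ∀ z, μ z ≠ 0 → 0 < c z := fun z h => (hc0 z).lt_of_ne' fun h0 => h (hcμ z h0)
  have hcposν : ∀ z, ν z ≠ 0 → 0 < c z := fun z h => (hc0 z).lt_of_ne' fun h0 => h (hcν z h0)
  have hmixac : ∀ ε : ℝ, 0 < ε → ε ≤ 1 →
      ∀ z, (1-ε) * ν z + ε * c z = 0 → (1-ε) * μ z + ε * c z = 0 := by
    intro ε hε0 hε1 z h
    have h2 := (add_eq_zero_iff_of_nonneg (mul_nonneg (by linarith) (hν0 z))
      (mul_nonneg hε0.le (hc0 z))).mp h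
    have hcz : c z = 0 := by
      rcases mul_eq_zero.mp h2.2 with h3 | h3
      · linarith
      · exact h3
    rw [hcμ z hcz, hcz]
    ring
  have hmixμ1 : ∀ ε : ℝ, ∑ z, ((1-ε) * μ z + ε * c z) = 1 := by
    intro ε
    rw [Finset.sum_add_distrib, ← Finset.mul_sum, ← Finset.mul_sum, hμ1, hc1]
    ring
  have hmixν1 : ∀ ε : ℝ, ∑ z, ((1-ε) * ν z + ε * c z) = 1 := by
    intro ε
    rw [Finset.sum_add_distrib, ← Finset.mul_sum, ← Finset.mul_sum, hν1, hc1]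
    ring
  obtain ⟨z1, hz1⟩ := exists_ne_zero_of_sum_one hμ1
  have hcz1 : 0 < c z1 := hcpos z1 hz1
  induction α using EReal.rec with
  | bot => exact absurd hα (by simp)
  | top =>
    rw [rdiv_top_eq]
    by_cases hac : ∀ z, μ z ≠ 0 → ν z ≠ 0
    · apply iSup_le
      rintro ⟨z, hz⟩
      rw [if_neg (hac z hz)]
      have hcz : 0 < c z := hcpos z hz
      have hνz : 0 < ν z := (hν0 z).lt_of_ne' (hac z hz)
      have htg : Tendsto (fun ε : ℝ =>
          Real.log (((1-ε)*μ z + ε*c z) / ((1-ε)*ν z + ε*c z))) (nhdsWithin (0:ℝ) (Set.Ioc (0:ℝ) 1)) (𝓝 (Real.log (μ z / ν z))) := by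
        apply (Real.continuousAt_log (div_ne_zero hz hνz.ne')).tendsto.comp
        exact Tendsto.div (tendsto_mix _ _) (tendsto_mix _ _) hνz.ne'
      apply le_of_tendsto (EReal.tendsto_coe.mpr htg)
      filter_upwards [hevIoc] with ε hε
      refine le_trans ?_ (hS ε hε.1 hε.2)
      rw [rdiv_top_eq]
      exact le_Dmax (fun w => (1-ε) * μ w + ε * c w) (fun w => (1-ε) * ν w + ε * c w) z
        (mix_pos (hμ0 z) hcz hε.1 hε.2).ne' (mix_pos (hν0 z) hcz hε.1 hε.2).ne'
    · push_neg at hac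
      obtain ⟨z0, hμz0, hνz0'⟩ := hac
      have hνz0 : ν z0 = 0 := hνz0'
      have hcz0 : 0 < c z0 := hcpos z0 hμz0
      have hμz0pos : 0 < μ z0 := (hμ0 z0).lt_of_ne' hμz0
      have hdenom : Tendsto (fun ε : ℝ => (1-ε)*ν z0 + ε*c z0) (nhdsWithin (0:ℝ) (Set.Ioc (0:ℝ) 1)) (𝓝[>] (0:ℝ)) := by
        rw [tendsto_nhdsWithin_iff]
        constructor
        · have h2 : Tendsto (fun ε : ℝ => (1-ε)*0 + ε*c z0) (nhdsWithin (0:ℝ) (Set.Ioc (0:ℝ) 1)) (𝓝 (0:ℝ)) := by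
            have h3 := tendsto_mix 0 (c z0)
            simpa using h3
          exact h2.congr (fun ε => by rw [hνz0])
        · filter_upwards [hevIoc] with ε hε
          exact mix_pos (hν0 z0) hcz0 hε.1 hε.2
      have hratio : Tendsto (fun ε : ℝ =>
          ((1-ε)*μ z0 + ε*c z0) / ((1-ε)*ν z0 + ε*c z0)) (nhdsWithin (0:ℝ) (Set.Ioc (0:ℝ) 1)) atTop := by
        have hinv := tendsto_inv_nhdsGT_zero.comp hdenom
        have := Tendsto.pos_mul_atTop hμz0pos (tendsto_mix (μ z0) (c z0)) hinv
        simpa [div_eq_mul_inv, Function.comp] using this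
      have hlogt : Tendsto (fun ε : ℝ =>
          Real.log (((1-ε)*μ z0 + ε*c z0) / ((1-ε)*ν z0 + ε*c z0))) (nhdsWithin (0:ℝ) (Set.Ioc (0:ℝ) 1)) atTop :=
        Real.tendsto_log_atTop.comp hratio
      have htop : (⊤:EReal) ≤ S := by
        apply le_of_tendsto (aux_coe_tendsto_top hlogt)
        filter_upwards [hevIoc] with ε hε
        refine le_trans ?_ (hS ε hε.1 hε.2)
        rw [rdiv_top_eq]
        exact le_Dmax (fun w => (1-ε) * μ w + ε * c w) (fun w => (1-ε) * ν w + ε * c w) z0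
          (mix_pos (hμ0 z0) hcz0 hε.1 hε.2).ne' (mix_pos (hν0 z0) hcz0 hε.1 hε.2).ne'
      exact le_trans le_top htop
  | coe t =>
    have ht0 : 0 < t := EReal.coe_pos.mp hα
    rcases eq_or_ne t 1 with rfl | ht1
    · -- α = 1 (KL)
      by_cases hac : ∀ z, ν z = 0 → μ z = 0
      · rw [rdiv_coe_one μ ν hac]
        have hterm : ∀ z, Tendsto (fun ε : ℝ =>
            ((1-ε)*μ z + ε*c z) * Real.log (((1-ε)*μ z + ε*c z) / ((1-ε)*ν z + ε*c z))) (nhdsWithin (0:ℝ) (Set.Ioc (0:ℝ) 1))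
            (𝓝 (μ z * Real.log (μ z / ν z))) := by
          intro z
          by_cases hνz : ν z = 0
          · have hμz : μ z = 0 := hac z hνz
            have htarget : μ z * Real.log (μ z / ν z) = 0 := by rw [hμz, zero_mul]
            rw [htarget]
            apply Tendsto.congr' _ tendsto_const_nhds
            filter_upwards [hevIoc] with ε hε
            rcases eq_or_ne (c z) 0 with hcz | hcz
            · rw [hμz, hνz, hcz]
              norm_num
            · have hpos : (0:ℝ) < ε * c z := mul_pos hε.1 ((hc0 z).lt_of_ne' hcz)
              rw [hμz, hνz, mul_zero, zero_add, div_self hpos.ne', Real.log_one, mul_zero]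
          · have hνzpos : 0 < ν z := (hν0 z).lt_of_ne' hνz
            have hcz : 0 < c z := hcposν z hνz
            have hev2 : (fun ε : ℝ =>
                ((1-ε)*μ z + ε*c z) * Real.log (((1-ε)*μ z + ε*c z) / ((1-ε)*ν z + ε*c z)))
                =ᶠ[(nhdsWithin (0:ℝ) (Set.Ioc (0:ℝ) 1))] (fun ε : ℝ =>
                ((1-ε)*μ z + ε*c z) * Real.log ((1-ε)*μ z + ε*c z)
                  - ((1-ε)*μ z + ε*c z) * Real.log ((1-ε)*ν z + ε*c z)) := by
              filter_upwards [hevIoc] with ε hε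
              exact xlog_id (mix_pos (hν0 z) hcz hε.1 hε.2).ne'
            rw [show μ z * Real.log (μ z / ν z)
                = μ z * Real.log (μ z) - μ z * Real.log (ν z) from xlog_id hνzpos.ne']
            apply Tendsto.congr' hev2.symm
            apply Tendsto.sub
            · exact (Real.continuous_mul_log.tendsto (μ z)).comp (tendsto_mix _ _)
            · exact Tendsto.mul (tendsto_mix _ _)
                ((Real.continuousAt_log hνzpos.ne').tendsto.comp (tendsto_mix _ _))
        have htg := tendsto_finset_sum Finset.univ (fun z (_ : z ∈ Finset.univ) => hterm z)
        apply le_of_tendsto (EReal.tendsto_coe.mpr htg)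
        filter_upwards [hevIoc] with ε hε
        refine le_trans (le_of_eq ?_) (hS ε hε.1 hε.2)
        rw [rdiv_coe_one _ _ (hmixac ε hε.1 hε.2)]
      · -- not a.c.: KL_ε → ∞
        push_neg at hac
        obtain ⟨z0, hνz0, hμz0⟩ := hac
        have hcz0 : 0 < c z0 := hcpos z0 hμz0
        have hμz0pos : 0 < μ z0 := (hμ0 z0).lt_of_ne' hμz0
        rw [rdiv_coe_one_top μ ν (by push_neg; exact ⟨z0, hνz0, hμz0⟩)]
        -- the function g
        set g : ℝ → ℝ := fun ε =>
          ((1-ε)*μ z0 + ε*c z0) * Real.log (((1-ε)*μ z0 + ε*c z0) / ((1-ε)*ν z0 + ε*c z0))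
            - (Fintype.card Z : ℝ) with hg
        have hdenom : Tendsto (fun ε : ℝ => (1-ε)*ν z0 + ε*c z0) (nhdsWithin (0:ℝ) (Set.Ioc (0:ℝ) 1)) (𝓝[>] (0:ℝ)) := by
          rw [tendsto_nhdsWithin_iff]
          constructor
          · have h2 : Tendsto (fun ε : ℝ => (1-ε)*0 + ε*c z0) (nhdsWithin (0:ℝ) (Set.Ioc (0:ℝ) 1)) (𝓝 (0:ℝ)) := by
              have h3 := tendsto_mix 0 (c z0)
              simpa using h3
            exact h2.congr (fun ε => by rw [hνz0])
          · filter_upwards [hevIoc] with ε hε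
            exact mix_pos (hν0 z0) hcz0 hε.1 hε.2
        have hratio : Tendsto (fun ε : ℝ =>
            ((1-ε)*μ z0 + ε*c z0) / ((1-ε)*ν z0 + ε*c z0)) (nhdsWithin (0:ℝ) (Set.Ioc (0:ℝ) 1)) atTop := by
          have hinv := tendsto_inv_nhdsGT_zero.comp hdenom
          have := Tendsto.pos_mul_atTop hμz0pos (tendsto_mix (μ z0) (c z0)) hinv
          simpa [div_eq_mul_inv, Function.comp] using this
        have hga : Tendsto g (nhdsWithin (0:ℝ) (Set.Ioc (0:ℝ) 1)) atTop := by
          apply tendsto_atTop_add_const_right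
          exact Tendsto.pos_mul_atTop hμz0pos (tendsto_mix (μ z0) (c z0))
            (Real.tendsto_log_atTop.comp hratio)
        apply le_of_tendsto (aux_coe_tendsto_top hga)
        filter_upwards [hevIoc] with ε hε
        refine le_trans ?_ (hS ε hε.1 hε.2)
        rw [rdiv_coe_one _ _ (hmixac ε hε.1 hε.2)]
        apply EReal.coe_le_coe_iff.mpr
        -- g ε ≤ KL_ε
        have hterm_lb : ∀ z, -1 ≤ ((1-ε)*μ z + ε*c z) *
            Real.log (((1-ε)*μ z + ε*c z) / ((1-ε)*ν z + ε*c z)) := by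
          intro z
          apply xlog_lb (mix_nonneg (hμ0 z) (hc0 z) hε.1 hε.2)
            (mix_nonneg (hν0 z) (hc0 z) hε.1 hε.2)
          · have h := Finset.single_le_sum (f := fun w => (1-ε) * ν w + ε * c w)
              (fun w _ => mix_nonneg (hν0 w) (hc0 w) hε.1 hε.2) (Finset.mem_univ z)
            rw [hmixν1 ε] at h
            exact h
          · exact hmixac ε hε.1 hε.2 z
        have hsum_split : ∑ z, ((1-ε)*μ z + ε*c z) *
            Real.log (((1-ε)*μ z + ε*c z) / ((1-ε)*ν z + ε*c z))
            = ((1-ε)*μ z0 + ε*c z0) * Real.log (((1-ε)*μ z0 + ε*c z0) / ((1-ε)*ν z0 + ε*c z0))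
              + ∑ z ∈ Finset.univ.erase z0, ((1-ε)*μ z + ε*c z) *
                Real.log (((1-ε)*μ z + ε*c z) / ((1-ε)*ν z + ε*c z)) :=
          (Finset.add_sum_erase _ _ (Finset.mem_univ z0)).symm
        have hrest : -(Fintype.card Z : ℝ) ≤ ∑ z ∈ Finset.univ.erase z0,
            ((1-ε)*μ z + ε*c z) * Real.log (((1-ε)*μ z + ε*c z) / ((1-ε)*ν z + ε*c z)) := by
          calc -(Fintype.card Z : ℝ) ≤ -((Finset.univ.erase z0).card : ℝ) := by
                have := Finset.card_erase_le (a := z0) (s := (Finset.univ : Finset Z))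
                have h2 : ((Finset.univ.erase z0).card : ℝ) ≤ (Fintype.card Z : ℝ) := by
                  exact_mod_cast this
                linarith
            _ = ∑ z ∈ Finset.univ.erase z0, (-1 : ℝ) := by
                rw [Finset.sum_const, nsmul_eq_mul]
                ring
            _ ≤ _ := Finset.sum_le_sum fun z _ => hterm_lb z
        rw [hg, hsum_split]
        simp only
        linarith
    · rcases lt_or_gt_of_ne ht1 with hlt | hgt
      · -- 0 < t < 1
        have hmixex : ∀ ε : ℝ, 0 < ε → ε ≤ 1 →
            ∃ z, ((1-ε) * μ z + ε * c z) ≠ 0 ∧ ((1-ε) * ν z + ε * c z) ≠ 0 :=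
          fun ε hε0 hε1 => ⟨z1, (mix_pos (hμ0 z1) hcz1 hε0 hε1).ne',
            (mix_pos (hν0 z1) hcz1 hε0 hε1).ne'⟩
        have hterm : ∀ z, Tendsto (fun ε : ℝ =>
            ((1-ε)*μ z + ε*c z) ^ t * ((1-ε)*ν z + ε*c z) ^ (1-t))
            (nhdsWithin (0:ℝ) (Set.Ioc (0:ℝ) 1)) (𝓝 (μ z ^ t * ν z ^ (1-t))) := by
          intro z
          exact Tendsto.mul ((tendsto_mix _ _).rpow_const (Or.inr ht0.le))
            ((tendsto_mix _ _).rpow_const (Or.inr (by linarith)))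
        have htQ : Tendsto (fun ε : ℝ =>
            Qclass t (fun z => (1-ε)*μ z + ε*c z) (fun z => (1-ε)*ν z + ε*c z))
            (nhdsWithin (0:ℝ) (Set.Ioc (0:ℝ) 1)) (𝓝 (Qclass t μ ν)) := by
          simp only [Qclass]
          exact tendsto_finset_sum Finset.univ (fun z _ => hterm z)
        by_cases hex : ∃ z, μ z ≠ 0 ∧ ν z ≠ 0
        · rw [rdiv_coe_lt1 hlt μ ν hex]
          obtain ⟨z2, hμ2, hν2⟩ := hex
          have hQpos : 0 < Qclass t μ ν := by
            have hterm2 : 0 < μ z2 ^ t * ν z2 ^ (1-t) :=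
              mul_pos (Real.rpow_pos_of_pos ((hμ0 z2).lt_of_ne' hμ2) _)
                (Real.rpow_pos_of_pos ((hν0 z2).lt_of_ne' hν2) _)
            exact lt_of_lt_of_le hterm2 (Finset.single_le_sum (fun z _ =>
              mul_nonneg (Real.rpow_nonneg (hμ0 z) _) (Real.rpow_nonneg (hν0 z) _))
              (Finset.mem_univ z2))
          have hlogQ := ((Real.continuousAt_log hQpos.ne').tendsto.comp htQ).const_mul (t-1)⁻¹
          apply le_of_tendsto (EReal.tendsto_coe.mpr hlogQ)
          filter_upwards [hevIoc] with ε hε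
          refine le_trans (le_of_eq ?_) (hS ε hε.1 hε.2)
          rw [rdiv_coe_lt1 hlt _ _ (hmixex ε hε.1 hε.2)]
          rfl
        · rw [rdiv_coe_lt1_top hlt μ ν hex]
          push_neg at hex
          have hQ0 : Tendsto (fun ε : ℝ =>
              Qclass t (fun z => (1-ε)*μ z + ε*c z) (fun z => (1-ε)*ν z + ε*c z))
              (nhdsWithin (0:ℝ) (Set.Ioc (0:ℝ) 1)) (𝓝 0) := by
            have hzero : Qclass t μ ν = 0 := by
              apply Finset.sum_eq_zero
              intro z _
              rcases eq_or_ne (μ z) 0 with h | h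
              · rw [h, Real.zero_rpow ht0.ne', zero_mul]
              · rw [hex z h, Real.zero_rpow (show (1-t:ℝ) ≠ 0 by linarith), mul_zero]
            have h4 := htQ
            rw [hzero] at h4
            exact h4
          have hQpos' : ∀ᶠ ε in (nhdsWithin (0:ℝ) (Set.Ioc (0:ℝ) 1)),
              Qclass t (fun z => (1-ε)*μ z + ε*c z) (fun z => (1-ε)*ν z + ε*c z)
                ∈ Set.Ioi (0:ℝ) := by
            filter_upwards [hevIoc] with ε hε
            have h1 : 0 < ((1-ε)*μ z1 + ε*c z1) ^ t * ((1-ε)*ν z1 + ε*c z1) ^ (1-t) :=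
              mul_pos (Real.rpow_pos_of_pos (mix_pos (hμ0 z1) hcz1 hε.1 hε.2) _)
                (Real.rpow_pos_of_pos (mix_pos (hν0 z1) hcz1 hε.1 hε.2) _)
            have h2 : ((1-ε)*μ z1 + ε*c z1) ^ t * ((1-ε)*ν z1 + ε*c z1) ^ (1-t)
                ≤ Qclass t (fun z => (1-ε)*μ z + ε*c z) (fun z => (1-ε)*ν z + ε*c z) :=
              Finset.single_le_sum (fun z _ =>
                mul_nonneg (Real.rpow_nonneg (mix_nonneg (hμ0 z) (hc0 z) hε.1 hε.2) _)
                  (Real.rpow_nonneg (mix_nonneg (hν0 z) (hc0 z) hε.1 hε.2) _))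
                (Finset.mem_univ z1)
            exact Set.mem_Ioi.mpr (lt_of_lt_of_le h1 h2)
          have hlogb := Real.tendsto_log_nhdsGT_zero.comp
            (tendsto_nhdsWithin_iff.mpr ⟨hQ0, hQpos'⟩)
          have hga := Tendsto.const_mul_atBot_of_neg
            (inv_lt_zero.mpr (by linarith : t - 1 < 0)) hlogb
          apply le_of_tendsto (aux_coe_tendsto_top hga)
          filter_upwards [hevIoc] with ε hε
          refine le_trans (le_of_eq ?_) (hS ε hε.1 hε.2)
          rw [rdiv_coe_lt1 hlt _ _ (hmixex ε hε.1 hε.2)]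
          rfl
      · -- 1 < t
        by_cases hac : ∀ z, ν z = 0 → μ z = 0
        · rw [rdiv_coe_gt1 hgt μ ν hac]
          have hQ1 := one_le_qsum hgt μ ν hμ0 hν0 hμ1 hν1 hac
          have hterm : ∀ z, Tendsto (fun ε : ℝ =>
              ((1-ε)*μ z + ε*c z) ^ t * ((1-ε)*ν z + ε*c z) ^ (1-t))
              (nhdsWithin (0:ℝ) (Set.Ioc (0:ℝ) 1)) (𝓝 (μ z ^ t * ν z ^ (1-t))) := by
            intro z
            by_cases hνz : ν z = 0
            · have hμz : μ z = 0 := hac z hνz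
              have htarget : μ z ^ t * ν z ^ (1-t) = 0 := by
                rw [hμz, Real.zero_rpow ht0.ne', zero_mul]
              rw [htarget]
              have hbase : Tendsto (fun ε : ℝ => ε * c z)
                  (nhdsWithin (0:ℝ) (Set.Ioc (0:ℝ) 1)) (𝓝 0) := by
                have hc2 : Continuous fun ε : ℝ => ε * c z := by continuity
                have h3 := hc2.tendsto 0
                rw [zero_mul] at h3
                exact h3.mono_left nhdsWithin_le_nhds
              apply Tendsto.congr' _ hbase
              filter_upwards [hevIoc] with ε hε
              simp only [hμz, hνz, mul_zero, zero_add]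
              symm
              rcases eq_or_lt_of_le (hc0 z) with h0 | h0
              · rw [← h0]
                simp [Real.zero_rpow ht0.ne']
              · rw [← Real.rpow_add (mul_pos hε.1 h0), show t + (1-t) = 1 by ring,
                  Real.rpow_one]
            · have hνzpos : 0 < ν z := (hν0 z).lt_of_ne' hνz
              exact Tendsto.mul ((tendsto_mix _ _).rpow_const (Or.inr ht0.le))
                ((tendsto_mix _ _).rpow_const (Or.inl hνzpos.ne'))
          have htQ : Tendsto (fun ε : ℝ =>
              Qclass t (fun z => (1-ε)*μ z + ε*c z) (fun z => (1-ε)*ν z + ε*c z))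
              (nhdsWithin (0:ℝ) (Set.Ioc (0:ℝ) 1)) (𝓝 (Qclass t μ ν)) := by
            simp only [Qclass]
            exact tendsto_finset_sum Finset.univ (fun z _ => hterm z)
          have hQQ : Qclass t μ ν = ∑ z, μ z ^ t * ν z ^ (1-t) := rfl
          have hQpos : (0:ℝ) < Qclass t μ ν := by rw [hQQ]; linarith
          have hlogQ := ((Real.continuousAt_log hQpos.ne').tendsto.comp
            htQ).const_mul (t-1)⁻¹
          apply le_of_tendsto (EReal.tendsto_coe.mpr hlogQ)
          filter_upwards [hevIoc] with ε hε
          refine le_trans (le_of_eq ?_) (hS ε hε.1 hε.2)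
          rw [rdiv_coe_gt1 hgt _ _ (hmixac ε hε.1 hε.2)]
          rfl
        · push_neg at hac
          obtain ⟨z0, hνz0, hμz0⟩ := hac
          rw [rdiv_coe_gt1_top hgt μ ν (by push_neg; exact ⟨z0, hνz0, hμz0⟩)]
          have hcz0 : 0 < c z0 := hcpos z0 hμz0
          have hμz0pos : 0 < μ z0 := (hμ0 z0).lt_of_ne' hμz0
          have hdenom : Tendsto (fun ε : ℝ => (1-ε)*ν z0 + ε*c z0)
              (nhdsWithin (0:ℝ) (Set.Ioc (0:ℝ) 1)) (𝓝[>] (0:ℝ)) := by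
            rw [tendsto_nhdsWithin_iff]
            constructor
            · have h2 : Tendsto (fun ε : ℝ => (1-ε)*0 + ε*c z0)
                  (nhdsWithin (0:ℝ) (Set.Ioc (0:ℝ) 1)) (𝓝 (0:ℝ)) := by
                have h3 := tendsto_mix 0 (c z0)
                simpa using h3
              exact h2.congr (fun ε => by rw [hνz0])
            · filter_upwards [hevIoc] with ε hε
              exact mix_pos (hν0 z0) hcz0 hε.1 hε.2
          have hBig : Tendsto (fun ε : ℝ => ((1-ε)*ν z0 + ε*c z0) ^ (1-t))
              (nhdsWithin (0:ℝ) (Set.Ioc (0:ℝ) 1)) atTop := by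
            have h1 : Tendsto (fun x : ℝ => x ^ (t-1)) atTop atTop :=
              tendsto_rpow_atTop (by linarith)
            have hinv := tendsto_inv_nhdsGT_zero.comp hdenom
            have h2 := h1.comp hinv
            apply Tendsto.congr' _ h2
            filter_upwards [hevIoc] with ε hε
            have hp : 0 < (1-ε)*ν z0 + ε*c z0 := mix_pos (hν0 z0) hcz0 hε.1 hε.2
            show ((1-ε)*ν z0 + ε*c z0)⁻¹ ^ (t-1) = ((1-ε)*ν z0 + ε*c z0) ^ (1-t)
            rw [Real.inv_rpow hp.le, ← Real.rpow_neg hp.le,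
              show -(t-1) = 1-t by ring]
          have hA : Tendsto (fun ε : ℝ => ((1-ε)*μ z0 + ε*c z0) ^ t)
              (nhdsWithin (0:ℝ) (Set.Ioc (0:ℝ) 1)) (𝓝 (μ z0 ^ t)) :=
            (tendsto_mix _ _).rpow_const (Or.inr ht0.le)
          have hprod := Tendsto.pos_mul_atTop (Real.rpow_pos_of_pos hμz0pos t) hA hBig
          have hQbig : Tendsto (fun ε : ℝ =>
              Qclass t (fun z => (1-ε)*μ z + ε*c z) (fun z => (1-ε)*ν z + ε*c z))
              (nhdsWithin (0:ℝ) (Set.Ioc (0:ℝ) 1)) atTop := by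
            apply tendsto_atTop_mono' _ _ hprod
            filter_upwards [hevIoc] with ε hε
            have h2 : ((1-ε)*μ z0 + ε*c z0) ^ t * ((1-ε)*ν z0 + ε*c z0) ^ (1-t)
                ≤ Qclass t (fun z => (1-ε)*μ z + ε*c z) (fun z => (1-ε)*ν z + ε*c z) :=
              Finset.single_le_sum (fun z _ =>
                mul_nonneg (Real.rpow_nonneg (mix_nonneg (hμ0 z) (hc0 z) hε.1 hε.2) _)
                  (Real.rpow_nonneg (mix_nonneg (hν0 z) (hc0 z) hε.1 hε.2) _))
                (Finset.mem_univ z0)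
            exact h2
          have hga := Tendsto.const_mul_atTop (inv_pos.mpr (by linarith : (0:ℝ) < t - 1))
            (Real.tendsto_log_atTop.comp hQbig)
          apply le_of_tendsto (aux_coe_tendsto_top hga)
          filter_upwards [hevIoc] with ε hε
          refine le_trans (le_of_eq ?_) (hS ε hε.1 hε.2)
          rw [rdiv_coe_gt1 hgt _ _ (hmixac ε hε.1 hε.2)]
          rfl

end GoalB
section Final
set_option linter.unusedSectionVars false
set_option maxHeartbeats 2000000

lemma psd_trace_re_nonneg {A : Matrix n n ℂ} (hA : A.PosSemidef) : 0 ≤ (A.trace).re := by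
  obtain ⟨B, rfl⟩ := (show ∃ C : Matrix n n ℂ, A = Cᴴ * C from by open scoped MatrixOrder in exact CStarAlgebra.nonneg_iff_eq_star_mul_self.mp hA.nonneg)
  exact aux_trace_re_conjT_nonneg B

lemma dist_mix {d : ℕ} (M : POVM (Fin d)) (ρ : Matrix (Fin d) (Fin d) ℂ) (ε : ℝ) (z : M.ι) :
    M.dist (((1 - ε : ℝ) : ℂ) • ρ + ((ε : ℝ) : ℂ) • ((d : ℂ))⁻¹ • (1 : Matrix (Fin d) (Fin d) ℂ)) z
      = (1-ε) * M.dist ρ z + ε * (((d:ℝ))⁻¹ * ((M.elem z).trace).re) := by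
  unfold POVM.dist
  rw [Matrix.add_mul, smul_mul_assoc, smul_mul_assoc, smul_mul_assoc, Matrix.one_mul,
    Matrix.trace_add, Matrix.trace_smul, Matrix.trace_smul, Matrix.trace_smul]
  simp only [smul_eq_mul, Complex.add_re, Complex.mul_re, Complex.ofReal_re, Complex.ofReal_im,
    Complex.inv_re, Complex.inv_im, Complex.natCast_re, Complex.natCast_im]
  have : Complex.normSq (d : ℂ) = (d:ℝ)^2 := by
    simp [Complex.normSq_apply]
    ring
  rw [this]
  rcases Nat.eq_zero_or_pos d with rfl | hd
  · norm_num
  · have hd' : ((d:ℝ))^2 ≠ 0 := by positivity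
    field_simp
    ring

theorem stmt11' (d : ℕ) (ρ σ : Matrix (Fin d) (Fin d) ℂ)
    (hρ : ρ.PosSemidef) (hρ1 : ρ.trace = 1) (hσ : σ.PosSemidef) (hσ1 : σ.trace = 1)
    (𝓜 : Set (POVM (Fin d))) (h𝓜 : 𝓜.Nonempty) (α : EReal) (hα : 0 < α) :
    mrdiv 𝓜 α ρ σ
      = ⨆ ε ∈ Set.Ioc (0 : ℝ) 1,
          mrdiv 𝓜 α
            (((1 - ε : ℝ) : ℂ) • ρ + ((ε : ℝ) : ℂ) • ((d : ℂ))⁻¹ • (1 : Matrix (Fin d) (Fin d) ℂ))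
            (((1 - ε : ℝ) : ℂ) • σ + ((ε : ℝ) : ℂ) • ((d : ℂ))⁻¹ • (1 : Matrix (Fin d) (Fin d) ℂ)) := by
  have hd : 0 < d := by
    by_contra h
    push_neg at h
    have hd0 : d = 0 := Nat.le_zero.mp h
    subst hd0
    rw [Matrix.trace_eq_zero_of_isEmpty] at hρ1
    exact absurd hρ1 (by norm_num)
  -- data for each POVM
  have hfacts : ∀ M : POVM (Fin d),
      (∀ z, 0 ≤ M.dist ρ z) ∧ (∀ z, 0 ≤ M.dist σ z) ∧
      (∀ z, 0 ≤ ((d:ℝ))⁻¹ * ((M.elem z).trace).re) ∧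
      (∑ z, M.dist ρ z = 1) ∧ (∑ z, M.dist σ z = 1) ∧
      (∑ z, ((d:ℝ))⁻¹ * ((M.elem z).trace).re = 1) ∧
      (∀ z, ((d:ℝ))⁻¹ * ((M.elem z).trace).re = 0 → M.dist ρ z = 0) ∧
      (∀ z, ((d:ℝ))⁻¹ * ((M.elem z).trace).re = 0 → M.dist σ z = 0) := by
    intro M
    have hdinv : ((d:ℝ))⁻¹ ≠ 0 := by positivity
    have helem0 : ∀ z : M.ι, ((d:ℝ))⁻¹ * ((M.elem z).trace).re = 0 → M.elem z = 0 := by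
      intro z h
      have h2 : ((M.elem z).trace).re = 0 := by
        rcases mul_eq_zero.mp h with h3 | h3
        · exact absurd h3 hdinv
        · exact h3
      exact aux_psd_trace_re_zero (M.pos z) h2
    refine ⟨fun z => M.dist_nonneg hρ z, fun z => M.dist_nonneg hσ z,
      fun z => mul_nonneg (by positivity) (psd_trace_re_nonneg (M.pos z)), ?_, ?_, ?_, ?_, ?_⟩
    · rw [POVM.dist_sum, hρ1, Complex.one_re]
    · rw [POVM.dist_sum, hσ1, Complex.one_re]
    · rw [← Finset.mul_sum, ← Complex.re_sum, ← Matrix.trace_sum, M.sum_one,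
        Matrix.trace_one]
      simp only [Fintype.card_fin, Complex.natCast_re]
      exact inv_mul_cancel₀ (by positivity)
    · intro z h
      unfold POVM.dist
      rw [helem0 z h, Matrix.mul_zero, Matrix.trace_zero, Complex.zero_re]
    · intro z h
      unfold POVM.dist
      rw [helem0 z h, Matrix.mul_zero, Matrix.trace_zero, Complex.zero_re]
  apply le_antisymm
  · rw [mrdiv]
    apply iSup₂_le
    intro M hM
    obtain ⟨h1, h2, h3, h4, h5, h6, h7, h8⟩ := hfacts M
    apply goalB α hα (M.dist ρ) (M.dist σ) (fun z => ((d:ℝ))⁻¹ * ((M.elem z).trace).re)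
      h1 h2 h3 h4 h5 h6 h7 h8
    intro ε hε0 hε1
    have he1 : (fun z => (1-ε) * M.dist ρ z + ε * (((d:ℝ))⁻¹ * ((M.elem z).trace).re))
        = M.dist (((1 - ε : ℝ) : ℂ) • ρ + ((ε : ℝ) : ℂ) • ((d : ℂ))⁻¹ • 1) :=
      funext fun z => (dist_mix M ρ ε z).symm
    have he2 : (fun z => (1-ε) * M.dist σ z + ε * (((d:ℝ))⁻¹ * ((M.elem z).trace).re))
        = M.dist (((1 - ε : ℝ) : ℂ) • σ + ((ε : ℝ) : ℂ) • ((d : ℂ))⁻¹ • 1) :=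
      funext fun z => (dist_mix M σ ε z).symm
    rw [he1, he2]
    refine le_trans ?_ (le_iSup₂_of_le ε ⟨hε0, hε1⟩ (le_refl _))
    rw [mrdiv]
    exact le_iSup₂_of_le M hM (le_refl _)
  · apply iSup₂_le
    intro ε hε
    rw [mrdiv, mrdiv]
    apply iSup₂_le
    intro M hM
    obtain ⟨h1, h2, h3, h4, h5, h6, h7, h8⟩ := hfacts M
    have he1 : (fun z => (1-ε) * M.dist ρ z + ε * (((d:ℝ))⁻¹ * ((M.elem z).trace).re))
        = M.dist (((1 - ε : ℝ) : ℂ) • ρ + ((ε : ℝ) : ℂ) • ((d : ℂ))⁻¹ • 1) :=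
      funext fun z => (dist_mix M ρ ε z).symm
    have he2 : (fun z => (1-ε) * M.dist σ z + ε * (((d:ℝ))⁻¹ * ((M.elem z).trace).re))
        = M.dist (((1 - ε : ℝ) : ℂ) • σ + ((ε : ℝ) : ℂ) • ((d : ℂ))⁻¹ • 1) :=
      funext fun z => (dist_mix M σ ε z).symm
    refine le_trans ?_ (le_iSup₂_of_le M hM (le_refl _))
    rw [← he1, ← he2]
    exact goalA α hα (M.dist ρ) (M.dist σ) (fun z => ((d:ℝ))⁻¹ * ((M.elem z).trace).re)
      h1 h2 h3 h4 h5 h6 h7 h8 hε.1 hε.2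

end Final
theorem stmt11 (d : ℕ) (ρ σ : Matrix (Fin d) (Fin d) ℂ)
    (hρ : ρ.PosSemidef) (hρ1 : ρ.trace = 1) (hσ : σ.PosSemidef) (hσ1 : σ.trace = 1)
    (𝓜 : Set (POVM (Fin d))) (h𝓜 : 𝓜.Nonempty) (α : EReal) (hα : 0 < α) :
    mrdiv 𝓜 α ρ σ
      = ⨆ ε ∈ Set.Ioc (0 : ℝ) 1,
          mrdiv 𝓜 α
            (((1 - ε : ℝ) : ℂ) • ρ + ((ε : ℝ) : ℂ) • ((d : ℂ))⁻¹ • (1 : Matrix (Fin d) (Fin d) ℂ))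
            (((1 - ε : ℝ) : ℂ) • σ + ((ε : ℝ) : ℂ) • ((d : ℂ))⁻¹ • (1 : Matrix (Fin d) (Fin d) ℂ)) := by
  exact stmt11' d ρ σ hρ hρ1 hσ hσ1 𝓜 h𝓜 α hα

end MRD
end
end

section
/- Let d ≥ 2, n ≥ 1, and α ∈ (0,∞] (including α = 1 and α = ∞). Consider the Hilbert space (ℂ^d ⊗ ℂ^d)^{⊗n}, identified with ((ℂ^d)^{⊗n})_A ⊗ ((ℂ^d)^{⊗n})_B by permuting tensor factors so that the n A-systems form one block and the n B-systems the other, and let ℳ be any set of POVMs on this space with LO(A₁…A_n : B₁…B_n) ⊆ ℳ ⊆ PPT(A₁…A_n : B₁…B_n). Then D_α^ℳ( Φ^{⊗n} ‖ (Φ⊥)^{⊗n} ) = n·log(d+1). -/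
open scoped Kronecker ComplexOrder
open Matrix Filter

noncomputable section
open scoped Classical

namespace MRD

variable {n : Type} [Fintype n] [DecidableEq n]

section Aux

variable {m : Type} [Fintype m] [DecidableEq m]

lemma psd_smul {M : Matrix m m ℂ} (hM : M.PosSemidef) {c : ℝ} (hc : 0 ≤ c) :
    ((c : ℂ) • M).PosSemidef := by
  rw [Matrix.posSemidef_iff_dotProduct_mulVec]
  constructor
  · unfold Matrix.IsHermitian
    rw [Matrix.conjTranspose_smul, hM.1.eq]
    congr 1
    simp
  · intro x
    rw [Matrix.smul_mulVec, dotProduct_smul]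
    exact smul_nonneg (by exact_mod_cast ((Complex.zero_le_real).2 hc)) (hM.dotProduct_mulVec_nonneg x)

lemma psd_of_proj {A : Matrix m m ℂ} (hA : A.IsHermitian) (h : A * A = A) : A.PosSemidef := by
  have hA' : A = Aᴴ * A := by rw [hA.eq, h]
  exact hA' ▸ Matrix.posSemidef_conjTranspose_mul_self A

lemma psd_of_sq2 {A : Matrix m m ℂ} (hA : A.IsHermitian) (h : A * A = (2:ℂ) • A) :
    A.PosSemidef := by
  have hherm : ((2:ℂ)⁻¹ • A).IsHermitian := by
    unfold Matrix.IsHermitian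
    rw [Matrix.conjTranspose_smul, hA.eq]
    congr 1
    simp
  have hproj : ((2:ℂ)⁻¹ • A) * ((2:ℂ)⁻¹ • A) = (2:ℂ)⁻¹ • A := by
    rw [Matrix.smul_mul, Matrix.mul_smul, h, smul_smul, smul_smul]
    norm_num
  have hps := psd_smul (psd_of_proj hherm hproj) (c := 2) (by norm_num)
  have e : ((2:ℝ):ℂ) • ((2:ℂ)⁻¹ • A) = A := by
    rw [smul_smul]
    norm_num
  rwa [e] at hps

lemma psd_diag_nonneg {A : Matrix m m ℂ} (hA : A.PosSemidef) (i : m) : 0 ≤ A i i := by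
  exact hA.diag_nonneg

lemma psd_trace_nonneg {A : Matrix m m ℂ} (hA : A.PosSemidef) : 0 ≤ A.trace.re := by
  have h : (0:ℂ) ≤ A.trace := Finset.sum_nonneg fun i _ => psd_diag_nonneg hA i
  exact (Complex.le_def.mp h).1

open scoped MatrixOrder in
lemma psd_sqrt_ex {A : Matrix m m ℂ} (hA : A.PosSemidef) :
    ∃ S : Matrix m m ℂ, Sᴴ = S ∧ S * S = A := by
  have h0 : 0 ≤ A := Matrix.nonneg_iff_posSemidef.mpr hA
  exact ⟨CFC.sqrt A, (IsSelfAdjoint.of_nonneg (CFC.sqrt_nonneg A)).star_eq,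
    CFC.sqrt_mul_sqrt_self A h0⟩

lemma tr2_nonneg' {A B : Matrix m m ℂ} (hA : A.PosSemidef) (hB : B.PosSemidef) :
    0 ≤ ((A * B).trace).re := by
  obtain ⟨S, hherm, hSS⟩ := psd_sqrt_ex hA
  have h1 : A * B = S * (S * B) := by rw [← Matrix.mul_assoc, hSS]
  have h2 : (A * B).trace = (S * B * Sᴴ).trace := by
    rw [h1, Matrix.trace_mul_comm S (S * B), hherm, Matrix.mul_assoc]
  rw [h2]
  exact psd_trace_nonneg (hB.mul_mul_conjTranspose_same S)

lemma psd_sum {ι : Type} [Fintype ι] (f : ι → Matrix m m ℂ) (h : ∀ i, (f i).PosSemidef) :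
    (∑ i, f i).PosSemidef :=
  Finset.sum_induction f _ (fun _ _ ha hb => ha.add hb) Matrix.PosSemidef.zero
    (fun i _ => h i)

/-- tensor products (indexed by function types) of PSD matrices are PSD -/
lemma tprod_psd {n : ℕ} (ρ : Fin n → Matrix (m × m) (m × m) ℂ)
    (h : ∀ i, (ρ i).PosSemidef) :
    (Matrix.of fun (x y : (Fin n → m) × (Fin n → m)) =>
      ∏ i, ρ i (x.1 i, x.2 i) (y.1 i, y.2 i)).PosSemidef := by
  choose B hB1 hB2 using fun i => psd_sqrt_ex (h i)
  have hBi : ∀ i, ρ i = (B i)ᴴ * (B i) := by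
    intro i
    rw [hB1 i, hB2 i]
  set C : Matrix (Fin n → m × m) ((Fin n → m) × (Fin n → m)) ℂ :=
    Matrix.of fun c x => ∏ i, B i (c i) (x.1 i, x.2 i) with hC
  have key : (Matrix.of fun (x y : (Fin n → m) × (Fin n → m)) =>
      ∏ i, ρ i (x.1 i, x.2 i) (y.1 i, y.2 i)) = Cᴴ * C := by
    ext x y
    simp only [Matrix.mul_apply, Matrix.conjTranspose_apply, Matrix.of_apply, hC]
    calc ∏ i, ρ i (x.1 i, x.2 i) (y.1 i, y.2 i)
        = ∏ i, ∑ a : m × m, star (B i a (x.1 i, x.2 i)) * B i a (y.1 i, y.2 i) := by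
          refine Finset.prod_congr rfl fun i _ => ?_
          rw [hBi i, Matrix.mul_apply]
          simp [Matrix.conjTranspose_apply]
      _ = ∑ c : Fin n → m × m, ∏ i, star (B i (c i) (x.1 i, x.2 i)) * B i (c i) (y.1 i, y.2 i) :=
          Fintype.prod_sum fun i a => star (B i a (x.1 i, x.2 i)) * B i a (y.1 i, y.2 i)
      _ = ∑ c : Fin n → m × m,
            star (∏ i, B i (c i) (x.1 i, x.2 i)) * ∏ i, B i (c i) (y.1 i, y.2 i) := by
          refine Finset.sum_congr rfl fun c _ => ?_
          rw [Finset.prod_mul_distrib]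
          congr 1
          rw [star_prod]
  rw [key]
  exact Matrix.posSemidef_conjTranspose_mul_self C






end Aux

/-- The swap operator on ℂ^d ⊗ ℂ^d. -/
def swapM (d : ℕ) : Matrix (Fin d × Fin d) (Fin d × Fin d) ℂ :=
  Matrix.of fun x y => if x.1 = y.2 ∧ x.2 = y.1 then 1 else 0

lemma swapM_eq₁ (d : ℕ) : swapM d = (1 : Matrix (Fin d × Fin d) (Fin d × Fin d) ℂ).submatrix id Prod.swap := by
  ext ⟨x1, x2⟩ ⟨y1, y2⟩
  simp [swapM, Matrix.one_apply, Prod.ext_iff]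

lemma swapM_eq₂ (d : ℕ) : swapM d = (1 : Matrix (Fin d × Fin d) (Fin d × Fin d) ℂ).submatrix Prod.swap id := by
  ext ⟨x1, x2⟩ ⟨y1, y2⟩
  simp [swapM, Matrix.one_apply, Prod.ext_iff, and_comm, eq_comm]

lemma swapM_herm (d : ℕ) : (swapM d).IsHermitian := by
  unfold Matrix.IsHermitian
  nth_rewrite 1 [swapM_eq₁]
  rw [Matrix.conjTranspose_submatrix, Matrix.conjTranspose_one, ← swapM_eq₂]

lemma swapM_sq (d : ℕ) : swapM d * swapM d = 1 := by
  nth_rewrite 1 [swapM_eq₁]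
  nth_rewrite 1 [swapM_eq₂]
  rw [show (Prod.swap : Fin d × Fin d → Fin d × Fin d) = ⇑(Equiv.prodComm (Fin d) (Fin d)) from (Equiv.coe_prodComm _ _).symm]
  rw [Matrix.submatrix_mul_equiv]
  simp

lemma one_add_swap_psd (d : ℕ) : (1 + swapM d).PosSemidef := by
  apply psd_of_sq2
  · exact Matrix.isHermitian_one.add (swapM_herm d)
  · rw [mul_add, add_mul, add_mul, mul_one, swapM_sq]
    ext i j
    simp [Matrix.add_apply, Matrix.one_apply]
    ring

lemma one_sub_swap_psd (d : ℕ) : (1 - swapM d).PosSemidef := by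
  apply psd_of_sq2
  · exact Matrix.isHermitian_one.sub (swapM_herm d)
  · rw [mul_sub, sub_mul, sub_mul, mul_one, swapM_sq]
    ext i j
    simp [Matrix.sub_apply, Matrix.one_apply]
    ring

lemma diagsum (d : ℕ) (c : ℂ) :
    (∑ z : Fin d × Fin d, if z.1 = z.2 then c else 0) = (d : ℂ) * c := by
  rw [Fintype.sum_prod_type]
  simp [Finset.sum_ite_eq, Finset.sum_const, Fintype.card_fin, nsmul_eq_mul]

lemma maxEnt_idem (d : ℕ) (hd : 0 < d) : maxEnt d * maxEnt d = maxEnt d := by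
  have hd0 : (d : ℂ) ≠ 0 := Nat.cast_ne_zero.mpr hd.ne'
  ext ⟨x1, x2⟩ ⟨y1, y2⟩
  rw [Matrix.mul_apply]
  by_cases hx : x1 = x2 <;> by_cases hy : y1 = y2
  · have : ∀ z : Fin d × Fin d,
        maxEnt d (x1, x2) z * maxEnt d z (y1, y2)
          = if z.1 = z.2 then (d : ℂ)⁻¹ * (d : ℂ)⁻¹ else 0 := by
      intro z
      by_cases hz : z.1 = z.2 <;> simp [maxEnt, hx, hy, hz]
    rw [Finset.sum_congr rfl fun z _ => this z, diagsum]
    simp only [maxEnt, Matrix.of_apply, hx, hy, and_self, if_true]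
    field_simp
  all_goals {
    have : ∀ z : Fin d × Fin d,
        maxEnt d (x1, x2) z * maxEnt d z (y1, y2) = 0 := by
      intro z
      simp only [maxEnt, Matrix.of_apply]
      by_cases hz : z.1 = z.2 <;> simp [hx, hy, hz]
    rw [Finset.sum_congr rfl fun z _ => this z]
    simp [maxEnt, hx, hy]
  }

lemma maxEnt_herm (d : ℕ) : (maxEnt d).IsHermitian := by
  unfold Matrix.IsHermitian
  ext ⟨x1, x2⟩ ⟨y1, y2⟩
  simp only [Matrix.conjTranspose_apply, maxEnt, Matrix.of_apply, apply_ite (star : ℂ → ℂ),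
    star_zero]
  by_cases hx : x1 = x2 <;> by_cases hy : y1 = y2 <;>
    simp [hx, hy, star_inv₀, star_natCast]

lemma maxEnt_psd (d : ℕ) (hd : 0 < d) : (maxEnt d).PosSemidef :=
  psd_of_proj (maxEnt_herm d) (maxEnt_idem d hd)

lemma one_sub_maxEnt_psd (d : ℕ) (hd : 0 < d) : (1 - maxEnt d).PosSemidef := by
  apply psd_of_proj (Matrix.isHermitian_one.sub (maxEnt_herm d))
  rw [mul_sub, sub_mul, sub_mul, mul_one, maxEnt_idem d hd]
  ext i j
  simp [Matrix.sub_apply, Matrix.one_apply]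

lemma maxEntPerp_eq_real (d : ℕ) :
    maxEntPerp d = ((((d : ℝ) ^ 2 - 1)⁻¹ : ℝ) : ℂ) • (1 - maxEnt d) := by
  unfold maxEntPerp
  congr 1
  push_cast
  rfl

lemma maxEntPerp_psd (d : ℕ) (hd : 0 < d) : (maxEntPerp d).PosSemidef := by
  rw [maxEntPerp_eq_real]
  apply psd_smul (one_sub_maxEnt_psd d hd)
  have h1 : (1 : ℝ) ≤ (d : ℝ) := by exact_mod_cast hd
  have h2 : 0 ≤ (d : ℝ) ^ 2 - 1 := by nlinarith
  exact inv_nonneg.mpr h2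


lemma ptrans_one {a b : Type} [Fintype a] [DecidableEq a] [Fintype b] [DecidableEq b] :
    ptrans (1 : Matrix (a × b) (a × b) ℂ) = 1 := by
  ext ⟨x1, x2⟩ ⟨y1, y2⟩
  by_cases h1 : x1 = y1 <;> by_cases h2 : x2 = y2 <;>
    simp [ptrans, Matrix.one_apply, Prod.ext_iff, h1, h2, eq_comm]

lemma ptrans_smul {a b : Type} (c : ℂ) (X : Matrix (a × b) (a × b) ℂ) :
    ptrans (c • X) = c • ptrans X := rfl

lemma ptrans_sub {a b : Type} (X Y : Matrix (a × b) (a × b) ℂ) :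
    ptrans (X - Y) = ptrans X - ptrans Y := rfl

lemma ptrans_maxEnt (d : ℕ) : ptrans (maxEnt d) = (d : ℂ)⁻¹ • swapM d := by
  ext ⟨x1, x2⟩ ⟨y1, y2⟩
  by_cases h1 : x1 = y2 <;> by_cases h2 : x2 = y1 <;>
    simp [ptrans, maxEnt, swapM, Matrix.smul_apply, h1, h2, eq_comm]

lemma ptrans_maxEntPerp (d : ℕ) :
    ptrans (maxEntPerp d) = ((d : ℂ) ^ 2 - 1)⁻¹ • (1 - (d : ℂ)⁻¹ • swapM d) := by
  unfold maxEntPerp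
  rw [ptrans_smul, ptrans_sub, ptrans_one, ptrans_maxEnt]

lemma ptrans_tpowBip {d : ℕ} (ρ : Matrix (Fin d × Fin d) (Fin d × Fin d) ℂ) (n : ℕ) :
    ptrans (tpowBip ρ n) = tpowBip (ptrans ρ) n := by
  ext ⟨x1, x2⟩ ⟨y1, y2⟩
  simp [ptrans, tpowBip]

lemma tpowBip_smul {d : ℕ} (c : ℂ) (ρ : Matrix (Fin d × Fin d) (Fin d × Fin d) ℂ) (n : ℕ) :
    tpowBip (c • ρ) n = c ^ n • tpowBip ρ n := by
  ext x y
  simp only [tpowBip, Matrix.of_apply, Matrix.smul_apply, smul_eq_mul,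
    Finset.prod_mul_distrib, Finset.prod_const, Finset.card_univ, Fintype.card_fin]

lemma prod_sign_pm {n : ℕ} (s : Fin n → Bool) :
    (∏ i, (if s i then (-1 : ℝ) else 1)) = 1 ∨ (∏ i, (if s i then (-1 : ℝ) else 1)) = -1 := by
  refine Finset.prod_induction _ (fun x => x = 1 ∨ x = -1) ?_ ?_ ?_
  · rintro a b (ha | ha) (hb | hb) <;> simp [ha, hb]
  · left; rfl
  · intro i _; by_cases h : s i <;> simp [h]

lemma scalar_diff (n : ℕ) (u v : Fin n → ℂ) :
    ((∏ i, ((2 : ℂ)⁻¹ * (u i + v i))) - ∏ i, ((2 : ℂ)⁻¹ * (u i - v i)))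
      = ∑ s : Fin n → Bool,
          (((1 - ∏ i, (if s i then (-1 : ℝ) else 1)) / 2 ^ n : ℝ) : ℂ) *
            ∏ i, (if s i then v i else u i) := by
  have e1 : ∏ i, (u i + v i) = ∑ s : Fin n → Bool, ∏ i, (if s i then v i else u i) := by
    rw [← Fintype.prod_sum (fun i (b : Bool) => if b then v i else u i)]
    refine Finset.prod_congr rfl fun i _ => ?_
    rw [Fintype.sum_bool]
    simp [add_comm]
  have e2 : ∏ i, (u i - v i)
      = ∑ s : Fin n → Bool,
          (∏ i, (if s i then (-1 : ℂ) else 1)) * ∏ i, (if s i then v i else u i) := by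
    have h1 : ∀ s : Fin n → Bool,
        (∏ i, (if s i then (-1 : ℂ) else 1)) * ∏ i, (if s i then v i else u i)
          = ∏ i, (if s i then -v i else u i) := by
      intro s
      rw [← Finset.prod_mul_distrib]
      refine Finset.prod_congr rfl fun i _ => ?_
      by_cases h : s i <;> simp [h]
    rw [Finset.sum_congr rfl (fun s _ => h1 s),
      ← Fintype.prod_sum (fun i (b : Bool) => if b then -v i else u i)]
    refine Finset.prod_congr rfl fun i _ => ?_
    rw [Fintype.sum_bool]
    simp [sub_eq_add_neg, add_comm]
  have e3 : ∀ w : Fin n → ℂ, ∏ i, ((2 : ℂ)⁻¹ * w i) = (2 : ℂ)⁻¹ ^ n * ∏ i, w i := by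
    intro w
    rw [Finset.prod_mul_distrib, Finset.prod_const, Finset.card_univ, Fintype.card_fin]
  rw [e3, e3, e1, e2, Finset.mul_sum, Finset.mul_sum, ← Finset.sum_sub_distrib]
  refine Finset.sum_congr rfl fun s _ => ?_
  have hcast : (((1 - ∏ i, (if s i then (-1 : ℝ) else 1)) / 2 ^ n : ℝ) : ℂ)
      = (2 : ℂ)⁻¹ ^ n * (1 - ∏ i, (if s i then (-1 : ℂ) else 1)) := by
    push_cast
    have h2 : ∀ i, (((if s i then (-1 : ℝ) else 1) : ℝ) : ℂ) = (if s i then (-1 : ℂ) else 1) := by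
      intro i; by_cases h : s i <;> simp [h]
    rw [Finset.prod_congr rfl fun i _ => h2 i, div_eq_mul_inv, mul_comm, inv_pow]
  rw [hcast]
  ring

lemma tpow_diff_psd {m : Type} [Fintype m] [DecidableEq m] {S T : Matrix (m × m) (m × m) ℂ}
    (hS : S.PosSemidef) (hT : T.PosSemidef) (n : ℕ) :
    (Matrix.of fun (x y : (Fin n → m) × (Fin n → m)) =>
        (∏ i, ((2 : ℂ)⁻¹ • (S + T)) (x.1 i, x.2 i) (y.1 i, y.2 i))
          - ∏ i, ((2 : ℂ)⁻¹ • (S - T)) (x.1 i, x.2 i) (y.1 i, y.2 i)).PosSemidef := by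
  have hWpsd : ∀ b : Bool, ((if b then T else S) : Matrix (m × m) (m × m) ℂ).PosSemidef := by
    intro b; cases b
    · simpa using hS
    · simpa using hT
  have key : (Matrix.of fun (x y : (Fin n → m) × (Fin n → m)) =>
        (∏ i, ((2 : ℂ)⁻¹ • (S + T)) (x.1 i, x.2 i) (y.1 i, y.2 i))
          - ∏ i, ((2 : ℂ)⁻¹ • (S - T)) (x.1 i, x.2 i) (y.1 i, y.2 i))
      = ∑ s : Fin n → Bool,
          ((((1 - ∏ i, (if s i then (-1 : ℝ) else 1)) / 2 ^ n : ℝ)) : ℂ) •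
            (Matrix.of fun (x y : (Fin n → m) × (Fin n → m)) =>
              ∏ i, ((if s i then T else S) : Matrix (m × m) (m × m) ℂ)
                (x.1 i, x.2 i) (y.1 i, y.2 i)) := by
    ext x y
    rw [Matrix.sum_apply]
    simp only [Matrix.smul_apply, Matrix.of_apply, smul_eq_mul, Matrix.add_apply,
      Matrix.sub_apply]
    rw [scalar_diff n (fun i => S (x.1 i, x.2 i) (y.1 i, y.2 i))
        (fun i => T (x.1 i, x.2 i) (y.1 i, y.2 i))]
    refine Finset.sum_congr rfl fun s _ => ?_
    congr 1
    refine Finset.prod_congr rfl fun i _ => ?_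
    by_cases h : s i <;> simp [h]
  rw [key]
  apply psd_sum
  intro s
  apply psd_smul
  · exact tprod_psd (fun i => (if s i then T else S)) (fun i => hWpsd (s i))
  · rcases prod_sign_pm s with h | h <;> rw [h] <;> positivity

lemma trace_mul_pairs {P : Type} [Fintype P] (M N : Matrix P P ℂ) :
    (M * N).trace = ∑ p : P × P, M p.1 p.2 * N p.2 p.1 := by
  rw [Matrix.trace, Fintype.sum_prod_type]
  simp only [Matrix.diag, Matrix.mul_apply]

/-- the involution implementing the partial transpose on index pairs -/
def ptEquiv (a b : Type) : ((a × b) × (a × b)) ≃ ((a × b) × (a × b)) where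
  toFun p := ((p.1.1, p.2.2), (p.2.1, p.1.2))
  invFun p := ((p.1.1, p.2.2), (p.2.1, p.1.2))
  left_inv p := by ext <;> rfl
  right_inv p := by ext <;> rfl

lemma trace_ptrans_mul {a b : Type} [Fintype a] [DecidableEq a] [Fintype b] [DecidableEq b]
    (X Y : Matrix (a × b) (a × b) ℂ) :
    (ptrans X * ptrans Y).trace = (X * Y).trace := by
  rw [trace_mul_pairs, trace_mul_pairs]
  rw [← Equiv.sum_comp (ptEquiv a b) (fun p => X p.1 p.2 * Y p.2 p.1)]
  rfl

lemma tpowBip_psd {d n : ℕ} (ρ : Matrix (Fin d × Fin d) (Fin d × Fin d) ℂ)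
    (hρ : ρ.PosSemidef) : (tpowBip ρ n).PosSemidef := by
  have := tprod_psd (m := Fin d) (fun _ : Fin n => ρ) (fun _ => hρ)
  simpa [tpowBip] using this

lemma trace_tpowBip {d n : ℕ} (ρ : Matrix (Fin d × Fin d) (Fin d × Fin d) ℂ) :
    (tpowBip ρ n).trace = ρ.trace ^ n := by
  rw [Matrix.trace]
  simp only [Matrix.diag, tpowBip, Matrix.of_apply]
  have h0 : (∑ x : (Fin n → Fin d) × (Fin n → Fin d), ∏ i, ρ (x.1 i, x.2 i) (x.1 i, x.2 i))
      = ∑ g : Fin n → Fin d × Fin d, ∏ i, ρ (g i) (g i) := by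
    refine (Fintype.sum_equiv (Equiv.arrowProdEquivProdArrow (Fin n) (fun _ => Fin d) (fun _ => Fin d))
      _ _ fun g => ?_).symm
    refine Finset.prod_congr rfl fun i _ => ?_
    simp [Equiv.arrowProdEquivProdArrow]
  rw [h0]
  have h2 := Finset.sum_prod_piFinset (Finset.univ : Finset (Fin d × Fin d))
    (fun (_ : Fin n) (z : Fin d × Fin d) => ρ z z)
  rw [Fintype.piFinset_univ] at h2
  rw [h2, Matrix.trace]
  simp [Matrix.diag, Finset.prod_const]

lemma trace_maxEnt (d : ℕ) (hd : 0 < d) : (maxEnt d).trace = 1 := by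
  have hd0 : (d : ℂ) ≠ 0 := Nat.cast_ne_zero.mpr hd.ne'
  rw [Matrix.trace]
  simp only [Matrix.diag, maxEnt, Matrix.of_apply]
  have : ∀ z : Fin d × Fin d, (if z.1 = z.2 ∧ z.1 = z.2 then (d : ℂ)⁻¹ else 0)
      = (if z.1 = z.2 then (d : ℂ)⁻¹ else 0) := by intro z; by_cases h : z.1 = z.2 <;> simp [h]
  rw [Finset.sum_congr rfl fun z _ => this z, diagsum]
  field_simp

lemma trace_maxEntPerp (d : ℕ) (hd : 2 ≤ d) : (maxEntPerp d).trace = 1 := by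
  have hdR : (2 : ℝ) ≤ (d : ℝ) := by exact_mod_cast hd
  have hcast : ((d : ℂ) ^ 2 - 1) = ((((d : ℝ) ^ 2 - 1) : ℝ) : ℂ) := by push_cast; ring
  have hd1 : ((d : ℂ) ^ 2 - 1) ≠ 0 := by
    rw [hcast]
    exact_mod_cast (by nlinarith : ((d : ℝ) ^ 2 - 1) ≠ 0)
  unfold maxEntPerp
  rw [Matrix.trace_smul, Matrix.trace_sub, Matrix.trace_one, trace_maxEnt d (by omega)]
  simp only [smul_eq_mul]
  rw [show (Fintype.card (Fin d × Fin d) : ℂ) - 1 = (d : ℂ) ^ 2 - 1 by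
    simp [Fintype.card_prod]; push_cast; ring]
  field_simp

/-- The master PPT inequality. -/
lemma ppt_bound {d n : ℕ} (hd : 2 ≤ d)
    (E : Matrix ((Fin n → Fin d) × (Fin n → Fin d)) ((Fin n → Fin d) × (Fin n → Fin d)) ℂ)
    (hE : (ptrans E).PosSemidef) :
    ((tpowBip (maxEnt d) n * E).trace).re
      ≤ ((d : ℝ) + 1) ^ n * ((tpowBip (maxEntPerp d) n * E).trace).re := by
  have hd0 : (d : ℂ) ≠ 0 := Nat.cast_ne_zero.mpr (by omega)
  have hdR : (2 : ℝ) ≤ (d : ℝ) := by exact_mod_cast hd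
  have hd1 : (d : ℂ) - 1 ≠ 0 := by
    rw [show (d : ℂ) - 1 = ((((d : ℝ) - 1) : ℝ) : ℂ) by push_cast; ring]
    exact_mod_cast (by nlinarith : ((d : ℝ) - 1) ≠ 0)
  have hd2 : (d : ℂ) + 1 ≠ 0 := by
    rw [show (d : ℂ) + 1 = ((((d : ℝ) + 1) : ℝ) : ℂ) by push_cast; ring]
    exact_mod_cast (by nlinarith : ((d : ℝ) + 1) ≠ 0)
  have hsq : (d : ℂ) ^ 2 - 1 = ((d : ℂ) - 1) * ((d : ℂ) + 1) := by ring
  have hsq0 : (d : ℂ) ^ 2 - 1 ≠ 0 := by rw [hsq]; exact mul_ne_zero hd1 hd2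
  set Gm : Matrix (Fin d × Fin d) (Fin d × Fin d) ℂ := ((d : ℂ) + 1) • ptrans (maxEntPerp d)
    with hGm
  set Hm : Matrix (Fin d × Fin d) (Fin d × Fin d) ℂ := ptrans (maxEnt d) with hHm
  -- single-copy PSD facts
  have hSeq : Gm + Hm = ((((d : ℝ) - 2) / ((d : ℝ) * ((d : ℝ) - 1)) : ℝ) : ℂ) • (1 + swapM d)
      + (((2 : ℝ) / ((d : ℝ) * ((d : ℝ) - 1)) : ℝ) : ℂ) • (1 : Matrix (Fin d × Fin d) (Fin d × Fin d) ℂ) := by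
    rw [hGm, hHm, ptrans_maxEntPerp, ptrans_maxEnt]
    ext ⟨i1, i2⟩ ⟨j1, j2⟩
    simp only [Matrix.add_apply, Matrix.smul_apply, Matrix.sub_apply, Matrix.one_apply,
      swapM, Matrix.of_apply, smul_eq_mul, Prod.mk.injEq]
    split_ifs <;> push_cast <;> field_simp <;> ring
  have hTeq : Gm - Hm = ((((d : ℝ) - 1)⁻¹ : ℝ) : ℂ) •
      ((1 : Matrix (Fin d × Fin d) (Fin d × Fin d) ℂ) - swapM d) := by
    rw [hGm, hHm, ptrans_maxEntPerp, ptrans_maxEnt]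
    ext ⟨i1, i2⟩ ⟨j1, j2⟩
    simp only [Matrix.sub_apply, Matrix.smul_apply, Matrix.one_apply,
      swapM, Matrix.of_apply, smul_eq_mul, Prod.mk.injEq]
    split_ifs <;> push_cast <;> field_simp <;> ring
  have hS : (Gm + Hm).PosSemidef := by
    rw [hSeq]
    apply Matrix.PosSemidef.add
    · exact psd_smul (one_add_swap_psd d)
        (div_nonneg (by linarith) (by nlinarith))
    · exact psd_smul Matrix.PosSemidef.one
        (div_nonneg (by norm_num) (by nlinarith))
  have hT : (Gm - Hm).PosSemidef := by
    rw [hTeq]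
    exact psd_smul (one_sub_swap_psd d) (inv_nonneg.mpr (by linarith))
  -- tensor-power PSD
  have hΔ0 := tpow_diff_psd hS hT n
  have e1 : (2 : ℂ)⁻¹ • ((Gm + Hm) + (Gm - Hm)) = Gm := by
    ext i j
    simp only [Matrix.smul_apply, Matrix.add_apply, Matrix.sub_apply, smul_eq_mul]
    ring
  have e2 : (2 : ℂ)⁻¹ • ((Gm + Hm) - (Gm - Hm)) = Hm := by
    ext i j
    simp only [Matrix.smul_apply, Matrix.add_apply, Matrix.sub_apply, smul_eq_mul]
    ring
  rw [e1, e2] at hΔ0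
  have hΔeq : tpowBip Gm n - tpowBip Hm n
      = (Matrix.of fun (x y : (Fin n → Fin d) × (Fin n → Fin d)) =>
        (∏ i, Gm (x.1 i, x.2 i) (y.1 i, y.2 i)) - ∏ i, Hm (x.1 i, x.2 i) (y.1 i, y.2 i)) := by
    ext x y
    simp [tpowBip, Matrix.sub_apply]
  have hΔ : (tpowBip Gm n - tpowBip Hm n).PosSemidef := by rw [hΔeq]; exact hΔ0
  -- pairing
  have hpair : 0 ≤ (((tpowBip Gm n - tpowBip Hm n) * ptrans E).trace).re :=
    tr2_nonneg' hΔ hE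
  rw [Matrix.sub_mul, Matrix.trace_sub] at hpair
  have hG : ((tpowBip Gm n * ptrans E).trace).re
      = ((d : ℝ) + 1) ^ n * ((tpowBip (maxEntPerp d) n * E).trace).re := by
    rw [hGm, tpowBip_smul, Matrix.smul_mul, Matrix.trace_smul]
    have hc : ((d : ℂ) + 1) ^ n = ((((d : ℝ) + 1) ^ n : ℝ) : ℂ) := by push_cast; ring
    rw [hc, smul_eq_mul, Complex.re_ofReal_mul]
    congr 1
    rw [← ptrans_tpowBip, trace_ptrans_mul]
  have hH : ((tpowBip Hm n * ptrans E).trace).re = ((tpowBip (maxEnt d) n * E).trace).re := by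
    rw [hHm, ← ptrans_tpowBip, trace_ptrans_mul]
  rw [Complex.sub_re, hG, hH] at hpair
  linarith




lemma rdiv_le_flat {Z : Type} [Fintype Z] (μ ν : Z → ℝ) (c : ℝ) (hc : 1 ≤ c)
    (hμ0 : ∀ z, 0 ≤ μ z) (hν0 : ∀ z, 0 ≤ ν z) (hsum : ∑ z, μ z = 1)
    (hle : ∀ z, μ z ≤ c * ν z) (α : EReal) (hα : 0 < α) :
    rdiv α μ ν ≤ ((Real.log c : ℝ) : EReal) := by
  have hc0 : 0 < c := lt_of_lt_of_le one_pos hc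
  have habs : ∀ z, ν z = 0 → μ z = 0 := by
    intro z h
    have h2 := hle z
    rw [h, mul_zero] at h2
    exact le_antisymm h2 (hμ0 z)
  have hratio : ∀ z, μ z ≠ 0 →
      0 < μ z ∧ 0 < ν z ∧ μ z / ν z ≤ c ∧ Real.log (μ z / ν z) ≤ Real.log c := by
    intro z hz
    have hν : 0 < ν z := by
      rcases lt_or_eq_of_le (hν0 z) with h | h
      · exact h
      · exact absurd (habs z h.symm) hz
    have hμpos : 0 < μ z := lt_of_le_of_ne (hμ0 z) (Ne.symm hz)
    have hdiv : μ z / ν z ≤ c := (div_le_iff₀ hν).mpr (by linarith [hle z])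
    exact ⟨hμpos, hν, hdiv, (Real.log_le_log_iff (div_pos hμpos hν) hc0).2 hdiv⟩
  obtain ⟨z0, hz0⟩ : ∃ z, μ z ≠ 0 := by
    by_contra h
    push_neg at h
    rw [Finset.sum_eq_zero (fun z _ => h z)] at hsum
    norm_num at hsum
  unfold rdiv
  by_cases hT : α = ⊤
  · rw [if_pos hT]
    unfold Dmax
    apply iSup_le
    rintro ⟨z, hz⟩
    obtain ⟨_, hν, _, hlog⟩ := hratio z hz
    rw [if_neg hν.ne']
    exact EReal.coe_le_coe_iff.mpr hlog
  · rw [if_neg hT]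
    have hB : α ≠ ⊥ := by
      intro h
      rw [h] at hα
      exact absurd hα (by simp)
    set a := α.toReal with ha
    have hαa : α = (a : EReal) := (EReal.coe_toReal hT hB).symm
    have ha0 : 0 < a := by
      rw [hαa] at hα
      exact_mod_cast hα
    by_cases h1 : α = 1
    · rw [if_pos h1, if_pos habs]
      apply EReal.coe_le_coe_iff.mpr
      calc ∑ z, μ z * Real.log (μ z / ν z) ≤ ∑ z, μ z * Real.log c := by
            apply Finset.sum_le_sum
            intro z _
            by_cases hz : μ z = 0
            · rw [hz]
              simp
            · exact mul_le_mul_of_nonneg_left (hratio z hz).2.2.2 (hμ0 z)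
        _ = Real.log c := by rw [← Finset.sum_mul, hsum, one_mul]
    · rw [if_neg h1]
      have ha1 : a ≠ 1 := by
        intro h
        apply h1
        rw [hαa, h]
        rfl
      by_cases h2 : 1 < α
      · -- α > 1
        rw [if_pos h2, if_pos habs]
        have ha2 : 1 < a := by
          rw [hαa] at h2
          exact_mod_cast h2
        have hterm : ∀ z, μ z ^ a * ν z ^ (1 - a) ≤ c ^ (a - 1) * μ z := by
          intro z
          by_cases hz : μ z = 0
          · rw [hz, Real.zero_rpow (ne_of_gt ha0), zero_mul, mul_zero]
          · obtain ⟨hμpos, hν, hdiv, _⟩ := hratio z hz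
            have e : (μ z / ν z) ^ (a - 1) * μ z = μ z ^ a * ν z ^ (1 - a) := by
              rw [Real.div_rpow hμpos.le hν.le, div_eq_mul_inv,
                ← Real.rpow_neg hν.le, show -(a - 1) = 1 - a by ring, mul_right_comm,
                ← Real.rpow_add_one (ne_of_gt hμpos), show a - 1 + 1 = a by ring]
            rw [← e]
            exact mul_le_mul_of_nonneg_right
              (Real.rpow_le_rpow (div_nonneg hμpos.le hν.le) hdiv (by linarith)) hμpos.le
        have hQle : Qclass a μ ν ≤ c ^ (a - 1) := by
          unfold Qclass
          calc ∑ z, μ z ^ a * ν z ^ (1 - a) ≤ ∑ z, c ^ (a - 1) * μ z :=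
                Finset.sum_le_sum fun z _ => hterm z
            _ = c ^ (a - 1) := by rw [← Finset.mul_sum, hsum, mul_one]
        have hQpos : 0 < Qclass a μ ν := by
          unfold Qclass
          apply Finset.sum_pos'
          · intro z _
            exact mul_nonneg (Real.rpow_nonneg (hμ0 z) a) (Real.rpow_nonneg (hν0 z) (1 - a))
          · obtain ⟨hμpos, hν, _, _⟩ := hratio z0 hz0
            exact ⟨z0, Finset.mem_univ z0,
              mul_pos (Real.rpow_pos_of_pos hμpos a) (Real.rpow_pos_of_pos hν (1 - a))⟩
        apply EReal.coe_le_coe_iff.mpr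
        have hlog : Real.log (Qclass a μ ν) ≤ (a - 1) * Real.log c := by
          calc Real.log (Qclass a μ ν) ≤ Real.log (c ^ (a - 1)) :=
                (Real.log_le_log_iff hQpos (Real.rpow_pos_of_pos hc0 _)).2 hQle
            _ = (a - 1) * Real.log c := Real.log_rpow hc0 _
        calc (a - 1)⁻¹ * Real.log (Qclass a μ ν)
            ≤ (a - 1)⁻¹ * ((a - 1) * Real.log c) :=
              mul_le_mul_of_nonneg_left hlog (inv_nonneg.mpr (by linarith))
          _ = Real.log c := by
              field_simp [sub_ne_zero.mpr ha1]
      · -- 0 < α < 1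
        rw [if_neg h2]
        have ha2 : a < 1 := by
          have hle1 : (a : EReal) ≤ 1 := hαa ▸ not_lt.mp h2
          have : a ≤ 1 := by exact_mod_cast hle1
          exact lt_of_le_of_ne this ha1
        have hex : ∃ z, μ z ≠ 0 ∧ ν z ≠ 0 := ⟨z0, hz0, (hratio z0 hz0).2.1.ne'⟩
        rw [if_pos hex]
        apply EReal.coe_le_coe_iff.mpr
        have hterm : ∀ z, c ^ (a - 1) * μ z ≤ μ z ^ a * ν z ^ (1 - a) := by
          intro z
          by_cases hz : μ z = 0
          · rw [hz, mul_zero, Real.zero_rpow (ne_of_gt ha0), zero_mul]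
          · obtain ⟨hμpos, hν, hdiv, _⟩ := hratio z hz
            have e : (μ z / ν z) ^ (a - 1) * μ z = μ z ^ a * ν z ^ (1 - a) := by
              rw [Real.div_rpow hμpos.le hν.le, div_eq_mul_inv,
                ← Real.rpow_neg hν.le, show -(a - 1) = 1 - a by ring, mul_right_comm,
                ← Real.rpow_add_one (ne_of_gt hμpos), show a - 1 + 1 = a by ring]
            rw [← e]
            exact mul_le_mul_of_nonneg_right
              (Real.rpow_le_rpow_of_nonpos (div_pos hμpos hν) hdiv (by linarith)) hμpos.le
        have hQge : c ^ (a - 1) ≤ Qclass a μ ν := by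
          unfold Qclass
          calc c ^ (a - 1) = ∑ z, c ^ (a - 1) * μ z := by rw [← Finset.mul_sum, hsum, mul_one]
            _ ≤ ∑ z, μ z ^ a * ν z ^ (1 - a) := Finset.sum_le_sum fun z _ => hterm z
        have hlog : (a - 1) * Real.log c ≤ Real.log (Qclass a μ ν) := by
          calc (a - 1) * Real.log c = Real.log (c ^ (a - 1)) := (Real.log_rpow hc0 _).symm
            _ ≤ Real.log (Qclass a μ ν) :=
              (Real.log_le_log_iff (Real.rpow_pos_of_pos hc0 _)
                (lt_of_lt_of_le (Real.rpow_pos_of_pos hc0 _) hQge)).2 hQge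
        calc (a - 1)⁻¹ * Real.log (Qclass a μ ν)
            ≤ (a - 1)⁻¹ * ((a - 1) * Real.log c) :=
              mul_le_mul_of_nonpos_left hlog (inv_nonpos.mpr (by linarith))
          _ = Real.log c := by
              field_simp [sub_ne_zero.mpr ha1]

lemma rdiv_eq_flat {Z : Type} [Fintype Z] (μ ν : Z → ℝ) (c : ℝ) (hc : 1 ≤ c)
    (hμ0 : ∀ z, 0 ≤ μ z) (hν : ∀ z, 0 < ν z) (hsum : ∑ z, μ z = 1)
    (hflat : ∀ z, μ z ≠ 0 → μ z = c * ν z) (α : EReal) (hα : 0 < α) :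
    rdiv α μ ν = ((Real.log c : ℝ) : EReal) := by
  have hc0 : 0 < c := lt_of_lt_of_le one_pos hc
  obtain ⟨z0, hz0⟩ : ∃ z, μ z ≠ 0 := by
    by_contra h
    push_neg at h
    rw [Finset.sum_eq_zero (fun z _ => h z)] at hsum
    norm_num at hsum
  have habs : ∀ z, ν z = 0 → μ z = 0 := fun z h => absurd h (hν z).ne'
  have hlogr : ∀ z, μ z ≠ 0 → Real.log (μ z / ν z) = Real.log c := by
    intro z hz
    rw [hflat z hz, mul_div_assoc, div_self (hν z).ne', mul_one]
  unfold rdiv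
  by_cases hT : α = ⊤
  · rw [if_pos hT]
    unfold Dmax
    have hconst : (fun z : {z : Z // μ z ≠ 0} =>
        (if ν z.1 = 0 then (⊤ : EReal) else ((Real.log (μ z.1 / ν z.1) : ℝ) : EReal)))
        = fun _ => ((Real.log c : ℝ) : EReal) := by
      funext z
      rw [if_neg (hν z.1).ne', hlogr z.1 z.2]
    rw [hconst]
    haveI : Nonempty {z : Z // μ z ≠ 0} := ⟨⟨z0, hz0⟩⟩
    exact iSup_const
  · rw [if_neg hT]
    have hB : α ≠ ⊥ := by
      intro h
      rw [h] at hα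
      exact absurd hα (by simp)
    set a := α.toReal with ha
    have hαa : α = (a : EReal) := (EReal.coe_toReal hT hB).symm
    have ha0 : 0 < a := by
      rw [hαa] at hα
      exact_mod_cast hα
    by_cases h1 : α = 1
    · rw [if_pos h1, if_pos habs]
      congr 1
      calc ∑ z, μ z * Real.log (μ z / ν z) = ∑ z, μ z * Real.log c := by
            refine Finset.sum_congr rfl fun z _ => ?_
            by_cases hz : μ z = 0
            · rw [hz, zero_mul, zero_mul]
            · rw [hlogr z hz]
        _ = Real.log c := by rw [← Finset.sum_mul, hsum, one_mul]
    · rw [if_neg h1]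
      have ha1 : a ≠ 1 := by
        intro h
        apply h1
        rw [hαa, h]
        rfl
      have hQ : Qclass a μ ν = c ^ (a - 1) := by
        unfold Qclass
        have hterm : ∀ z, μ z ^ a * ν z ^ (1 - a) = c ^ (a - 1) * μ z := by
          intro z
          by_cases hz : μ z = 0
          · rw [hz, Real.zero_rpow (ne_of_gt ha0), zero_mul, mul_zero]
          · have hμpos : 0 < μ z := lt_of_le_of_ne (hμ0 z) (Ne.symm hz)
            have e : (μ z / ν z) ^ (a - 1) * μ z = μ z ^ a * ν z ^ (1 - a) := by
              rw [Real.div_rpow hμpos.le (hν z).le, div_eq_mul_inv,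
                ← Real.rpow_neg (hν z).le, show -(a - 1) = 1 - a by ring, mul_right_comm,
                ← Real.rpow_add_one (ne_of_gt hμpos), show a - 1 + 1 = a by ring]
            rw [← e]
            congr 2
            rw [hflat z hz, mul_div_assoc, div_self (hν z).ne', mul_one]
        rw [Finset.sum_congr rfl fun z _ => hterm z, ← Finset.mul_sum, hsum, mul_one]
      have hval : (a - 1)⁻¹ * Real.log (Qclass a μ ν) = Real.log c := by
        rw [hQ, Real.log_rpow hc0]
        field_simp [sub_ne_zero.mpr ha1]
      by_cases h2 : 1 < α
      · rw [if_pos h2, if_pos habs, hval]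
      · rw [if_neg h2]
        have hex : ∃ z, μ z ≠ 0 ∧ ν z ≠ 0 := ⟨z0, hz0, (hν z0).ne'⟩
        rw [if_pos hex, hval]







section PartD

lemma trace_mul_diagonal {P : Type} [Fintype P] [DecidableEq P] (ρ : Matrix P P ℂ) (w : P → ℂ) :
    (ρ * Matrix.diagonal w).trace = ∑ u, ρ u u * w u := by
  rw [Matrix.trace]
  simp only [Matrix.diag, Matrix.mul_apply, Matrix.diagonal_apply]
  refine Finset.sum_congr rfl fun u _ => ?_
  rw [Finset.sum_eq_single u]
  · simp
  · intro v _ hv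
    simp [hv]
  · simp

lemma trace_mul_pointmass {P Q : Type} [Fintype P] [DecidableEq P] [Fintype Q] [DecidableEq Q]
    (ρ : Matrix (P × Q) (P × Q) ℂ) (p : P) (q : Q) :
    (ρ * ((Matrix.diagonal fun t => if t = p then (1 : ℂ) else 0) ⊗ₖ
          (Matrix.diagonal fun t => if t = q then (1 : ℂ) else 0))).trace = ρ (p, q) (p, q) := by
  rw [Matrix.diagonal_kronecker_diagonal, trace_mul_diagonal]
  rw [Fintype.sum_prod_type]
  rw [Finset.sum_eq_single p]
  · rw [Finset.sum_eq_single q]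
    · simp
    · intro v _ hv
      simp [hv]
    · simp
  · intro u _ hu
    apply Finset.sum_eq_zero
    intro v _
    simp [hu]
  · simp

def basisPOVM (k : Type) [Fintype k] [DecidableEq k] : POVM k where
  ι := k
  elem x := Matrix.diagonal fun t => if t = x then (1 : ℂ) else 0
  pos x := Matrix.PosSemidef.diagonal (by
    intro t
    by_cases h : t = x <;> simp [h])
  sum_one := by
    ext i j
    rw [Matrix.sum_apply]
    by_cases h : i = j
    · subst h
      simp [Matrix.diagonal_apply, Matrix.one_apply, Finset.sum_ite_eq']
    · simp [Matrix.diagonal_apply, Matrix.one_apply, h]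

def prodBasisPOVM (d n : ℕ) : POVM ((Fin n → Fin d) × (Fin n → Fin d)) where
  ι := (Fin n → Fin d) × (Fin n → Fin d)
  elem z := (basisPOVM (Fin n → Fin d)).elem z.1 ⊗ₖ (basisPOVM (Fin n → Fin d)).elem z.2
  pos z := by
    show ((Matrix.diagonal fun t => if t = z.1 then (1 : ℂ) else 0) ⊗ₖ
      (Matrix.diagonal fun t => if t = z.2 then (1 : ℂ) else 0)).PosSemidef
    rw [Matrix.diagonal_kronecker_diagonal]
    refine Matrix.PosSemidef.diagonal ?_
    intro t
    by_cases h1 : t.1 = z.1 <;> by_cases h2 : t.2 = z.2 <;> simp [h1, h2]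
  sum_one := by
    show (∑ z : (Fin n → Fin d) × (Fin n → Fin d),
      (Matrix.diagonal fun t => if t = z.1 then (1 : ℂ) else 0) ⊗ₖ
        (Matrix.diagonal fun t => if t = z.2 then (1 : ℂ) else 0)) = 1
    ext ⟨i1, i2⟩ ⟨j1, j2⟩
    rw [Matrix.sum_apply]
    simp only [Matrix.kroneckerMap_apply, Matrix.diagonal_apply, Matrix.one_apply]
    rw [Fintype.sum_prod_type]
    by_cases h1 : i1 = j1 <;> by_cases h2 : i2 = j2
    · subst h1
      subst h2
      simp [Finset.sum_ite_eq', Prod.ext_iff]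
    · simp [h1, h2, Prod.ext_iff]
    · simp [h1, h2, Prod.ext_iff]
    · simp [h1, h2, Prod.ext_iff]

lemma prodBasis_mem_LO (d n : ℕ) :
    prodBasisPOVM d n ∈ LO (Fin n → Fin d) (Fin n → Fin d) :=
  ⟨basisPOVM _, basisPOVM _, Equiv.refl _, fun _ => rfl⟩

lemma dist_prodBasis_mu (d n : ℕ) (z : (Fin n → Fin d) × (Fin n → Fin d)) :
    (prodBasisPOVM d n).dist (tpowBip (maxEnt d) n) z
      = ∏ i, (if z.1 i = z.2 i then (d : ℝ)⁻¹ else 0) := by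
  show ((tpowBip (maxEnt d) n *
    ((Matrix.diagonal fun t => if t = z.1 then (1 : ℂ) else 0) ⊗ₖ
     (Matrix.diagonal fun t => if t = z.2 then (1 : ℂ) else 0))).trace).re = _
  rw [trace_mul_pointmass]
  show ((∏ i, maxEnt d (z.1 i, z.2 i) (z.1 i, z.2 i))).re = _
  have hcast : (∏ i, maxEnt d (z.1 i, z.2 i) (z.1 i, z.2 i))
      = (((∏ i, if z.1 i = z.2 i then (d : ℝ)⁻¹ else 0 : ℝ)) : ℂ) := by
    rw [Complex.ofReal_prod]
    refine Finset.prod_congr rfl fun i _ => ?_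
    by_cases h : z.1 i = z.2 i <;> simp [maxEnt, h]
  rw [hcast, Complex.ofReal_re]

lemma dist_prodBasis_nu (d n : ℕ) (z : (Fin n → Fin d) × (Fin n → Fin d)) :
    (prodBasisPOVM d n).dist (tpowBip (maxEntPerp d) n) z
      = ∏ i, (if z.1 i = z.2 i then ((d : ℝ) ^ 2 - 1)⁻¹ * (1 - (d : ℝ)⁻¹)
          else ((d : ℝ) ^ 2 - 1)⁻¹) := by
  show ((tpowBip (maxEntPerp d) n *
    ((Matrix.diagonal fun t => if t = z.1 then (1 : ℂ) else 0) ⊗ₖ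
     (Matrix.diagonal fun t => if t = z.2 then (1 : ℂ) else 0))).trace).re = _
  rw [trace_mul_pointmass]
  show ((∏ i, maxEntPerp d (z.1 i, z.2 i) (z.1 i, z.2 i))).re = _
  have hcast : (∏ i, maxEntPerp d (z.1 i, z.2 i) (z.1 i, z.2 i))
      = (((∏ i, if z.1 i = z.2 i then ((d : ℝ) ^ 2 - 1)⁻¹ * (1 - (d : ℝ)⁻¹)
          else ((d : ℝ) ^ 2 - 1)⁻¹ : ℝ)) : ℂ) := by
    rw [Complex.ofReal_prod]
    refine Finset.prod_congr rfl fun i _ => ?_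
    by_cases h : z.1 i = z.2 i <;>
      simp [maxEntPerp, maxEnt, Matrix.smul_apply, Matrix.sub_apply, Matrix.one_apply, h] <;>
      push_cast <;> ring
  rw [hcast, Complex.ofReal_re]


end PartD

theorem stmt18 (d : ℕ) (hd : 2 ≤ d) (n : ℕ) (hn : 1 ≤ n) (α : EReal) (hα : 0 < α)
    (𝓜 : Set (POVM ((Fin n → Fin d) × (Fin n → Fin d))))
    (hLO : LO (Fin n → Fin d) (Fin n → Fin d) ⊆ 𝓜)
    (hPPT : 𝓜 ⊆ PPT (Fin n → Fin d) (Fin n → Fin d)) :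
    mrdiv 𝓜 α (tpowBip (maxEnt d) n) (tpowBip (maxEntPerp d) n)
      = (((n : ℝ) * Real.log ((d : ℝ) + 1) : ℝ) : EReal) := by
  have hdR : (2 : ℝ) ≤ (d : ℝ) := by exact_mod_cast hd
  have hdne : (d : ℝ) ≠ 0 := by linarith
  have hd2ne : (d : ℝ) ^ 2 - 1 ≠ 0 := by nlinarith
  set c : ℝ := ((d : ℝ) + 1) ^ n with hc_def
  have hc1 : (1 : ℝ) ≤ c := one_le_pow₀ (by linarith)
  have hlogc : Real.log c = (n : ℝ) * Real.log ((d : ℝ) + 1) := by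
    rw [hc_def, Real.log_pow]
  set ρ := tpowBip (maxEnt d) n with hρ
  set σ := tpowBip (maxEntPerp d) n with hσ
  have hρpsd : ρ.PosSemidef := tpowBip_psd _ (maxEnt_psd d (by omega))
  have hσpsd : σ.PosSemidef := tpowBip_psd _ (maxEntPerp_psd d (by omega))
  have hρtr : ρ.trace = 1 := by
    rw [hρ, trace_tpowBip, trace_maxEnt d (by omega), one_pow]
  apply le_antisymm
  · -- upper bound
    unfold mrdiv
    apply iSup₂_le
    intro M hM
    have h1 : ∀ z, 0 ≤ M.dist ρ z := fun z => tr2_nonneg' hρpsd (M.pos z)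
    have h2 : ∀ z, 0 ≤ M.dist σ z := fun z => tr2_nonneg' hσpsd (M.pos z)
    have h3 : ∑ z, M.dist ρ z = 1 := by
      unfold POVM.dist
      rw [← Complex.re_sum, ← Matrix.trace_sum, ← Finset.mul_sum, M.sum_one, mul_one, hρtr]
      simp
    have h4 : ∀ z, M.dist ρ z ≤ c * M.dist σ z := by
      intro z
      have := ppt_bound hd (M.elem z) (hPPT hM z)
      exact this
    have := rdiv_le_flat (M.dist ρ) (M.dist σ) c hc1 h1 h2 h3 h4 α hα
    rwa [hlogc] at this
  · -- lower bound
    unfold mrdiv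
    refine le_trans (le_of_eq ?_) (le_iSup₂ (prodBasisPOVM d n) (hLO (prodBasis_mem_LO d n)))
    have prodconst : ∀ (t : ℝ) (z : (Fin n → Fin d) × (Fin n → Fin d)), z.1 = z.2 →
        (∏ i, if z.1 i = z.2 i then t else (0:ℝ)) = t ^ n := by
      intro t z h
      calc ∏ i, (if z.1 i = z.2 i then t else (0:ℝ))
          = ∏ _i : Fin n, t := Finset.prod_congr rfl fun i _ => if_pos (congrFun h i)
        _ = t ^ n := by rw [Finset.prod_const, Finset.card_univ, Fintype.card_fin]
    have prodconst2 : ∀ (t s : ℝ) (z : (Fin n → Fin d) × (Fin n → Fin d)), z.1 = z.2 →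
        (∏ i, if z.1 i = z.2 i then t else s) = t ^ n := by
      intro t s z h
      calc ∏ i, (if z.1 i = z.2 i then t else s)
          = ∏ _i : Fin n, t := Finset.prod_congr rfl fun i _ => if_pos (congrFun h i)
        _ = t ^ n := by rw [Finset.prod_const, Finset.card_univ, Fintype.card_fin]
    have hA : ∀ z, 0 ≤ (prodBasisPOVM d n).dist ρ z := by
      intro z
      rw [hρ, dist_prodBasis_mu d n z]
      apply Finset.prod_nonneg
      intro i _
      by_cases h : z.1 i = z.2 i <;> simp [h]
    have hB : ∀ z, 0 < (prodBasisPOVM d n).dist σ z := by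
      intro z
      rw [hσ, dist_prodBasis_nu d n z]
      apply Finset.prod_pos
      intro i _
      have h1 : 0 < (d : ℝ) ^ 2 - 1 := by nlinarith
      have h2 : 0 < 1 - (d : ℝ)⁻¹ := by
        rw [sub_pos, inv_lt_one_iff₀]
        right
        linarith
      by_cases h : z.1 i = z.2 i <;> simp only [h, if_true, if_false] <;> positivity
    have hC : ∑ z, (prodBasisPOVM d n).dist ρ z = 1 := by
      have hform : ∀ z : (Fin n → Fin d) × (Fin n → Fin d),
          (prodBasisPOVM d n).dist ρ z = if z.1 = z.2 then ((d : ℝ)⁻¹) ^ n else 0 := by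
        intro z
        rw [hρ, dist_prodBasis_mu]
        by_cases h : z.1 = z.2
        · rw [if_pos h, prodconst _ z h]
        · rw [if_neg h]
          obtain ⟨i, hi⟩ : ∃ i, z.1 i ≠ z.2 i := by
            by_contra hcon
            push_neg at hcon
            exact h (funext hcon)
          exact Finset.prod_eq_zero (Finset.mem_univ i) (if_neg hi)
      rw [Finset.sum_congr rfl fun (z : (prodBasisPOVM d n).ι) _ => hform z]
      show (∑ z : (Fin n → Fin d) × (Fin n → Fin d),
          if z.1 = z.2 then ((d : ℝ)⁻¹) ^ n else 0) = 1
      rw [Fintype.sum_prod_type]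
      simp only [Finset.sum_ite_eq, Finset.mem_univ, if_true]
      rw [Finset.sum_const, Finset.card_univ, Fintype.card_fun, Fintype.card_fin,
        Fintype.card_fin, nsmul_eq_mul]
      push_cast
      rw [← mul_pow, mul_inv_cancel₀ hdne, one_pow]
    have hD : ∀ z, (prodBasisPOVM d n).dist ρ z ≠ 0 →
        (prodBasisPOVM d n).dist ρ z = c * (prodBasisPOVM d n).dist σ z := by
      intro z hz
      rw [hρ, dist_prodBasis_mu d n z] at hz ⊢
      rw [hσ, dist_prodBasis_nu d n z]
      have hall : z.1 = z.2 := by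
        funext i
        by_contra h
        exact hz (Finset.prod_eq_zero (Finset.mem_univ i) (if_neg h))
      rw [prodconst _ z hall, prodconst2 _ _ z hall, hc_def, ← mul_pow]
      congr 1
      field_simp
      ring
    have hres := rdiv_eq_flat ((prodBasisPOVM d n).dist ρ) ((prodBasisPOVM d n).dist σ)
      c hc1 hA hB hC hD α hα
    rw [hres, hlogc]


end MRD
end
end
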